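/- arXiv:1502.03733 — 7 statements merged into one kernel-verified Lean document; each statement's English description precedes it below -/
import Mathlib

section
/- For every integer p ≥ 1 and every x ∈ ℝ, the cardinal B-spline satisfies the two-scale refinement relation ψ_p(x) = 2^{−p} · Σ_{l=0}^{p+1} binom(p+1, l) · ψ_p(2x − l), where binom(p+1,l) denotes the binomial coefficient. -/
open MeasureTheory Set

/-- The cardinal B-spline `ψ_p : ℝ → ℝ`: `ψ_0` is the characteristic function of `(0,1]`
and `ψ_p(x) = (x/p)·ψ_{p−1}(x) + ((p+1−x)/p)·ψ_{p−1}(x−1)` for `p ≥ 1`. -/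
noncomputable def cardB : ℕ → ℝ → ℝ
  | 0, x => if 0 < x ∧ x ≤ 1 then 1 else 0
  | (p + 1), x => (x / (p + 1)) * cardB p x + (((p : ℝ) + 2 - x) / (p + 1)) * cardB p (x - 1)

lemma cardB_zero_refine (x : ℝ) : cardB 0 x = cardB 0 (2 * x) + cardB 0 (2 * x - 1) := by
  simp only [cardB]
  rcases le_or_gt x (1 / 2) with h | h
  · by_cases h0 : 0 < x
    · rw [if_pos ⟨h0, by linarith⟩, if_pos ⟨by linarith, by linarith⟩,
        if_neg (by rintro ⟨a, b⟩; linarith)]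
      ring
    · rw [if_neg (by rintro ⟨a, b⟩; exact h0 a), if_neg (by rintro ⟨a, b⟩; linarith),
        if_neg (by rintro ⟨a, b⟩; linarith)]
      ring
  · by_cases h1 : x ≤ 1
    · rw [if_pos ⟨by linarith, h1⟩, if_neg (by rintro ⟨a, b⟩; linarith),
        if_pos ⟨by linarith, by linarith⟩]
      ring
    · rw [if_neg (by rintro ⟨a, b⟩; linarith), if_neg (by rintro ⟨a, b⟩; linarith),
        if_neg (by rintro ⟨a, b⟩; linarith)]
      ring

/-- coefficient on the left-hand side of the key sum identity -/
noncomputable def Lcoef (p : ℕ) (x : ℝ) : ℕ → ℝ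
  | 0 => 2 * x * (Nat.choose (p + 1) 0 : ℝ)
  | 1 => 2 * x * (Nat.choose (p + 1) 1 : ℝ)
  | (k + 2) => 2 * x * (Nat.choose (p + 1) (k + 2) : ℝ)
      + 2 * ((p : ℝ) + 2 - x) * (Nat.choose (p + 1) k : ℝ)

/-- coefficient on the right-hand side of the key sum identity -/
noncomputable def Rcoef (p : ℕ) (x : ℝ) : ℕ → ℝ
  | 0 => 2 * x * (Nat.choose (p + 2) 0 : ℝ)
  | (k + 1) => (2 * x - ((k : ℝ) + 1)) * (Nat.choose (p + 2) (k + 1) : ℝ)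
      + ((p : ℝ) + 2 + (k : ℝ) - 2 * x) * (Nat.choose (p + 2) k : ℝ)

lemma coef_eq (p : ℕ) (x : ℝ) : ∀ k, Lcoef p x k = Rcoef p x k := by
  intro k
  match k with
  | 0 => simp [Lcoef, Rcoef]
  | 1 =>
      have c1 : ((p + 1).choose 1 : ℝ) = (p : ℝ) + 1 := by
        rw [Nat.choose_one_right]; push_cast; ring
      have c2 : ((p + 2).choose 1 : ℝ) = (p : ℝ) + 2 := by
        rw [Nat.choose_one_right]; push_cast; ring
      show 2 * x * ((p + 1).choose 1 : ℝ)
        = (2 * x - ((0 : ℕ) + 1 : ℝ)) * ((p + 2).choose (0 + 1) : ℝ)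
          + ((p : ℝ) + 2 + (0 : ℕ) - 2 * x) * ((p + 2).choose 0 : ℝ)
      rw [zero_add, c1, c2, Nat.choose_zero_right]
      push_cast
      ring
  | (k + 2) =>
      have H1 : (Nat.choose (p + 2) (k + 2) : ℝ)
          = Nat.choose (p + 1) (k + 1) + Nat.choose (p + 1) (k + 2) := by
        exact_mod_cast congrArg (Nat.cast : ℕ → ℝ) (Nat.choose_succ_succ (p + 1) (k + 1))
      have H2 : (Nat.choose (p + 2) (k + 1) : ℝ)
          = Nat.choose (p + 1) k + Nat.choose (p + 1) (k + 1) := by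
        exact_mod_cast congrArg (Nat.cast : ℕ → ℝ) (Nat.choose_succ_succ (p + 1) k)
      have H3 : ((p : ℝ) + 2) * Nat.choose (p + 1) (k + 1)
          = Nat.choose (p + 2) (k + 2) * ((k : ℝ) + 2) := by
        exact_mod_cast congrArg (Nat.cast : ℕ → ℝ) (Nat.add_one_mul_choose_eq (p + 1) (k + 1))
      have H4 : ((p : ℝ) + 2) * Nat.choose (p + 1) k
          = Nat.choose (p + 2) (k + 1) * ((k : ℝ) + 1) := by
        exact_mod_cast congrArg (Nat.cast : ℕ → ℝ) (Nat.add_one_mul_choose_eq (p + 1) k)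
      show 2 * x * (Nat.choose (p + 1) (k + 2) : ℝ)
            + 2 * ((p : ℝ) + 2 - x) * (Nat.choose (p + 1) k : ℝ)
          = (2 * x - (((k + 1 : ℕ) : ℝ) + 1)) * (Nat.choose (p + 2) ((k + 1) + 1) : ℝ)
            + ((p : ℝ) + 2 + ((k + 1 : ℕ) : ℝ) - 2 * x) * (Nat.choose (p + 2) (k + 1) : ℝ)
      have e : (k + 1) + 1 = k + 2 := rfl
      rw [e]
      push_cast
      linear_combination (-2 * x) * H1 + (2 * x - ((p : ℝ) + 2)) * H2 - H3 + H4

lemma cardB_refine (p : ℕ) (x : ℝ) :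
    cardB p x = (2 : ℝ) ^ (-(p : ℤ)) *
      ∑ l ∈ Finset.range (p + 2), (Nat.choose (p + 1) l : ℝ) * cardB p (2 * x - l) := by
  induction p generalizing x with
  | zero =>
      rw [Finset.sum_range_succ, Finset.sum_range_succ, Finset.sum_range_zero]
      norm_num
      exact cardB_zero_refine x
  | succ p ih =>
      have hp1 : ((p : ℝ) + 1) ≠ 0 := by positivity
      set F : ℕ → ℝ := fun k => cardB p (2 * x - k) with hF
      set Sa := ∑ l ∈ Finset.range (p + 2), (Nat.choose (p + 1) l : ℝ) * F l with hSa
      set Sb := ∑ l ∈ Finset.range (p + 2), (Nat.choose (p + 1) l : ℝ) * F (l + 2) with hSb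
      set T1 := ∑ l ∈ Finset.range (p + 3), (2 * x - l) * (Nat.choose (p + 2) l : ℝ) * F l with hT1
      set T2 := ∑ l ∈ Finset.range (p + 3),
        ((p : ℝ) + 2 + l - 2 * x) * (Nat.choose (p + 2) l : ℝ) * F (l + 1) with hT2
      -- rewrite Sa with indices shifted by two
      have hSa' : Sa = (∑ i ∈ Finset.range (p + 2), (Nat.choose (p + 1) (i + 2) : ℝ) * F (i + 2))
          + (Nat.choose (p + 1) 1 : ℝ) * F 1 + (Nat.choose (p + 1) 0 : ℝ) * F 0 := by
        rw [hSa, show p + 2 = (p + 1) + 1 from rfl, Finset.sum_range_succ',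
          Finset.sum_range_succ', Finset.sum_range_succ, Finset.sum_range_succ]
        have e1 : (p + 1).choose (p + 2) = 0 := Nat.choose_eq_zero_of_lt (by omega)
        have e2 : (p + 1).choose (p + 1 + 2) = 0 := Nat.choose_eq_zero_of_lt (by omega)
        simp only [e1, e2, Nat.cast_zero, zero_mul, add_zero, zero_add]
      -- rewrite T1 with indices shifted by one
      have hT1' : T1 = (∑ i ∈ Finset.range (p + 3),
            (2 * x - ((i : ℝ) + 1)) * (Nat.choose (p + 2) (i + 1) : ℝ) * F (i + 1))
          + 2 * x * (Nat.choose (p + 2) 0 : ℝ) * F 0 := by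
        rw [hT1, show p + 3 = (p + 2) + 1 from rfl, Finset.sum_range_succ',
          Finset.sum_range_succ
            (fun i => (2 * x - ((i : ℝ) + 1)) * (Nat.choose (p + 2) (i + 1) : ℝ) * F (i + 1))
            (p + 2)]
        have e1 : (p + 2).choose (p + 2 + 1) = 0 := Nat.choose_eq_zero_of_lt (by omega)
        have hc : ∀ k ∈ Finset.range (p + 2),
            (2 * x - ((k + 1 : ℕ) : ℝ)) * ((p + 2).choose (k + 1) : ℝ) * F (k + 1)
              = (2 * x - ((k : ℝ) + 1)) * ((p + 2).choose (k + 1) : ℝ) * F (k + 1) := by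
          intro k _; push_cast; ring
        rw [Finset.sum_congr rfl hc]
        simp only [e1, Nat.cast_zero, zero_mul, mul_zero, add_zero, zero_add, sub_zero]

      -- the key sum identity
      have key : 2 * x * Sa + 2 * ((p : ℝ) + 2 - x) * Sb = T1 + T2 := by
        have hL : ∑ k ∈ Finset.range (p + 4), Lcoef p x k * F k
            = 2 * x * Sa + 2 * ((p : ℝ) + 2 - x) * Sb := by
          rw [show p + 4 = (p + 3) + 1 from rfl, Finset.sum_range_succ',
            show p + 3 = (p + 2) + 1 from rfl, Finset.sum_range_succ']
          have hs : ∀ i ∈ Finset.range (p + 2), Lcoef p x (i + 1 + 1) * F (i + 1 + 1)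
              = 2 * x * ((Nat.choose (p + 1) (i + 2) : ℝ) * F (i + 2))
                + 2 * ((p : ℝ) + 2 - x) * ((Nat.choose (p + 1) i : ℝ) * F (i + 2)) := by
            intro i _
            have e : i + 1 + 1 = i + 2 := rfl
            rw [e]
            simp only [Lcoef]
            ring
          rw [Finset.sum_congr rfl hs, Finset.sum_add_distrib, ← Finset.mul_sum, ← Finset.mul_sum]
          simp only [zero_add, Lcoef]
          rw [hSa', hSb]
          ring
        have hR : ∑ k ∈ Finset.range (p + 4), Rcoef p x k * F k = T1 + T2 := by
          rw [show p + 4 = (p + 3) + 1 from rfl, Finset.sum_range_succ']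
          have hs : ∀ i ∈ Finset.range (p + 3), Rcoef p x (i + 1) * F (i + 1)
              = (2 * x - ((i : ℝ) + 1)) * (Nat.choose (p + 2) (i + 1) : ℝ) * F (i + 1)
                + ((p : ℝ) + 2 + (i : ℝ) - 2 * x) * (Nat.choose (p + 2) i : ℝ) * F (i + 1) := by
            intro i _
            simp only [Rcoef]
            ring
          rw [Finset.sum_congr rfl hs, Finset.sum_add_distrib]
          have h2 : (∑ i ∈ Finset.range (p + 3),
              ((p : ℝ) + 2 + (i : ℝ) - 2 * x) * (Nat.choose (p + 2) i : ℝ) * F (i + 1)) = T2 := by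
            rw [hT2]
          rw [h2, hT1']
          simp only [Rcoef, Nat.cast_zero, Nat.choose_zero_right, Nat.cast_one]
          ring
        rw [← hL, ← hR]
        exact Finset.sum_congr rfl (fun k _ => by rw [coef_eq])
      -- now the main computation
      have hb : ∀ l ∈ Finset.range (p + 2),
          (Nat.choose (p + 1) l : ℝ) * cardB p (2 * (x - 1) - l)
            = (Nat.choose (p + 1) l : ℝ) * F (l + 2) := by
        intro l _
        have e : 2 * (x - 1) - (l : ℝ) = 2 * x - ((l + 2 : ℕ) : ℝ) := by push_cast; ring
        rw [e]
      have hsplitR : ∀ l ∈ Finset.range (p + 3),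
          (Nat.choose (p + 2) l : ℝ) * cardB (p + 1) (2 * x - l)
            = ((2 * x - l) * (Nat.choose (p + 2) l : ℝ) * F l
              + ((p : ℝ) + 2 + l - 2 * x) * (Nat.choose (p + 2) l : ℝ) * F (l + 1))
                / ((p : ℝ) + 1) := by
        intro l _
        have hrec : cardB (p + 1) (2 * x - l)
            = ((2 * x - l) / ((p : ℝ) + 1)) * cardB p (2 * x - l)
              + (((p : ℝ) + 2 - (2 * x - l)) / ((p : ℝ) + 1)) * cardB p (2 * x - l - 1) := rfl
        have h1 : cardB p (2 * x - l - 1) = F (l + 1) := by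
          have e : 2 * x - (l : ℝ) - 1 = 2 * x - ((l + 1 : ℕ) : ℝ) := by push_cast; ring
          rw [e]
        have h0 : cardB p (2 * x - l) = F l := rfl
        rw [hrec, h1, h0]
        field_simp
        ring
      have hpow : (2 : ℝ) ^ (-((p + 1 : ℕ) : ℤ)) = (2 : ℝ) ^ (-(p : ℤ)) / 2 := by
        push_cast
        rw [neg_add, zpow_add₀ (by norm_num : (2 : ℝ) ≠ 0)]
        norm_num
        ring
      calc cardB (p + 1) x
          = (x / ((p : ℝ) + 1)) * cardB p x
            + (((p : ℝ) + 2 - x) / ((p : ℝ) + 1)) * cardB p (x - 1) := rfl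
        _ = (x / ((p : ℝ) + 1)) * ((2 : ℝ) ^ (-(p : ℤ)) * Sa)
            + (((p : ℝ) + 2 - x) / ((p : ℝ) + 1)) * ((2 : ℝ) ^ (-(p : ℤ)) * Sb) := by
            rw [ih x, ih (x - 1), hSa, hSb]
            rw [Finset.sum_congr rfl hb]
        _ = (2 : ℝ) ^ (-((p + 1 : ℕ) : ℤ)) *
            ∑ l ∈ Finset.range (p + 3), (Nat.choose (p + 2) l : ℝ) * cardB (p + 1) (2 * x - l) := by
            rw [Finset.sum_congr rfl hsplitR, ← Finset.sum_div, Finset.sum_add_distrib,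
              ← hT1, ← hT2, hpow]
            linear_combination ((2 : ℝ) ^ (-(p : ℤ)) * ((p : ℝ) + 1)⁻¹ / 2) * key

/-- two-scale refinement relation for cardinal B-splines. -/
theorem cardB_refinement (p : ℕ) (hp : 1 ≤ p) (x : ℝ) :
    cardB p x = (2 : ℝ) ^ (-(p : ℤ)) *
      ∑ l ∈ Finset.range (p + 2), (Nat.choose (p + 1) l : ℝ) * cardB p (2 * x - l) := by
  exact cardB_refine p x
end

section
/- Let p ≥ 1 be an integer and define g_p(θ) := Σ_{l=−p}^{p} ( E(2p+1, p+l) / (2p+1)! ) · cos(l·θ) for θ ∈ ℝ. Then: (i) g_p(θ) > 0 for every θ ∈ ℝ; and (ii) for all θ₁, θ₂ ∈ ℝ with cos θ₁ ≤ cos θ₂ one has g_p(θ₁) ≤ g_p(θ₂). (For a uniform periodic grid, h·g_p(2jhπ) is the j-th eigenvalue of the periodic B-spline mass matrix of degree p, so this says that the symbol of the mass matrix is positive and monotone in cos(2jhπ).) -/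
open MeasureTheory

/-- The Eulerian numbers `E(m,k)` (as real numbers), defined by `E(0,0)=1`, `E(0,k)=0`
for `k ≠ 0`, and `E(m,k) = (m−k)·E(m−1,k−1) + (k+1)·E(m−1,k)` for `m ≥ 1`. -/
noncomputable def eulerianNum : ℕ → ℤ → ℝ
  | 0, k => if k = 0 then 1 else 0
  | (m + 1), k => (((m : ℝ) + 1) - (k : ℝ)) * eulerianNum m (k - 1) + ((k : ℝ) + 1) * eulerianNum m k

/-- The symbol `g_p(θ) = Σ_{l=−p}^{p} (E(2p+1,p+l)/(2p+1)!)·cos(lθ)` of the periodic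
B-spline mass matrix of degree `p`. -/
noncomputable def massSymbol (p : ℕ) (θ : ℝ) : ℝ :=
  ∑ l ∈ Finset.Icc (-(p : ℤ)) (p : ℤ),
    (eulerianNum (2 * p + 1) ((p : ℤ) + l) / (Nat.factorial (2 * p + 1) : ℝ)) *
      Real.cos ((l : ℝ) * θ)

/-!
Writing `x = 1 + cos θ`, we show `g_p(θ) = ∑ₖ b(p,k) xᵏ` (`cosPoly`) with `b(p,k) ≥ 0` and
`b(p,0) > 0`; both claims follow at once since `x ≥ 0`. The link between the two expansions is
the differential operator `L_q f = (q²(1 + cos θ) + q) f - 2q sin θ f' + (1 - cos θ) f''`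
(`symbolOp`). Since differentiating `cos (l θ)` brings down a factor `l`, applying the Eulerian
recurrence twice gives `(p+1)(2p+3) g_{p+1} = L_{p+1} g_p`. On the other hand `L_q` sends `xᵏ` to
a combination of `xᵏ⁻¹, xᵏ, xᵏ⁺¹` whose coefficients are nonnegative for `k ≤ q`, so `b(p+1,·)`
is obtained from `b(p,·)` by a recurrence with nonnegative coefficients.
-/

open Real Finset

lemma eulerianNum_of_neg {k : ℤ} (hk : k < 0) : ∀ m, eulerianNum m k = 0
  | 0 => if_neg hk.ne
  | m + 1 => by
    rw [eulerianNum, eulerianNum_of_neg hk, eulerianNum_of_neg (by omega : k - 1 < 0)]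
    ring

lemma eulerianNum_of_le {m : ℕ} {k : ℤ} (hm : 0 < m) (hk : m ≤ k) : eulerianNum m k = 0 := by
  induction m generalizing k with
  | zero => omega
  | succ m ih =>
    rcases Nat.eq_zero_or_pos m with rfl | hm
    · obtain rfl | hk1 := eq_or_ne k 1
      · norm_num [eulerianNum]
      · simp [eulerianNum, show k ≠ 0 by omega, show k - 1 ≠ 0 by omega]
    · rw [eulerianNum, ih hm (by omega), ih hm (by omega)]
      ring

lemma eulerianNum_add_two (n : ℕ) (k : ℤ) :
    eulerianNum (n + 2) k
      = ((n : ℝ) + 2 - k) ^ 2 * eulerianNum n (k - 2)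
        + (((n : ℝ) + 2 - k) * k + (k + 1) * ((n : ℝ) + 1 - k)) * eulerianNum n (k - 1)
        + ((k : ℝ) + 1) ^ 2 * eulerianNum n k := by
  simp only [eulerianNum, sub_sub, show (1 : ℤ) + 1 = 2 by norm_num]
  push_cast
  ring

lemma sum_Icc_comp_add_one {M : Type*} [AddCommMonoid M] (f : ℤ → M) {a b : ℤ}
    (ha : f a = 0) (hb : f (b + 1) = 0) :
    ∑ m ∈ Icc a b, f (m + 1) = ∑ m ∈ Icc a b, f m := by
  have hmap : ∑ m ∈ Icc a b, f (m + 1) = ∑ m ∈ Icc (a + 1) (b + 1), f m := by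
    rw [← map_add_right_Icc, sum_map]
    rfl
  rw [hmap, sum_subset (Icc_subset_Icc (by omega) le_rfl : Icc (a + 1) (b + 1) ⊆ Icc a (b + 1)),
    sum_subset (Icc_subset_Icc le_rfl (by omega) : Icc a b ⊆ Icc a (b + 1))]
  · intro m hm hm'
    simp only [mem_Icc] at hm hm'
    rwa [show m = b + 1 by omega]
  · intro m hm hm'
    simp only [mem_Icc] at hm hm'
    rwa [show m = a by omega]

lemma sum_Icc_comp_sub_one {M : Type*} [AddCommMonoid M] (f : ℤ → M) {a b : ℤ}
    (ha : f (a - 1) = 0) (hb : f b = 0) :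
    ∑ m ∈ Icc a b, f (m - 1) = ∑ m ∈ Icc a b, f m := by
  simpa using (sum_Icc_comp_add_one (fun m => f (m - 1)) ha (by simpa using hb)).symm

lemma sum_range_comp_add_one {M : Type*} [AddCommMonoid M] (f : ℕ → M) {N : ℕ}
    (h0 : f 0 = 0) (hN : f N = 0) :
    ∑ k ∈ range N, f (k + 1) = ∑ k ∈ range N, f k := by
  have h := (sum_range_succ' f N).symm.trans (sum_range_succ f N)
  rwa [h0, hN, add_zero, add_zero] at h

noncomputable def symbolOp (q : ℝ) (f : ℝ → ℝ) (θ : ℝ) : ℝ :=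
  (q ^ 2 * (1 + cos θ) + q) * f θ - 2 * q * sin θ * deriv f θ
    + (1 - cos θ) * deriv (deriv f) θ

lemma symbolOp_sum {ι : Type*} (s : Finset ι) (c : ι → ℝ) (f : ι → ℝ → ℝ)
    (hf : ∀ i ∈ s, ContDiff ℝ 2 (f i)) (q θ : ℝ) :
    symbolOp q (fun θ => ∑ i ∈ s, c i * f i θ) θ = ∑ i ∈ s, c i * symbolOp q (f i) θ := by
  have hd : ∀ i ∈ s, Differentiable ℝ (f i) := fun i hi => (hf i hi).differentiable two_ne_zero
  have hd' : ∀ i ∈ s, Differentiable ℝ (deriv (f i)) := fun i hi =>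
    ((contDiff_succ_iff_deriv (n := 1)).1 (hf i hi)).2.2.differentiable one_ne_zero
  have h1 : deriv (fun θ => ∑ i ∈ s, c i * f i θ) = fun θ => ∑ i ∈ s, c i * deriv (f i) θ := by
    ext θ
    rw [deriv_fun_sum fun i hi => ((hd i hi) θ).const_mul (c i)]
    exact sum_congr rfl fun i hi => deriv_const_mul _ ((hd i hi) θ)
  have h2 : deriv (fun θ => ∑ i ∈ s, c i * deriv (f i) θ) θ
      = ∑ i ∈ s, c i * deriv (deriv (f i)) θ := by
    rw [deriv_fun_sum fun i hi => ((hd' i hi) θ).const_mul (c i)]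
    exact sum_congr rfl fun i hi => deriv_const_mul _ ((hd' i hi) θ)
  simp only [symbolOp, h1, h2, mul_sum]
  rw [← sum_sub_distrib, ← sum_add_distrib]
  exact sum_congr rfl fun i _ => by ring

lemma symbolOp_cos_mul (q x θ : ℝ) :
    symbolOp q (fun θ => cos (x * θ)) θ
      = ((q - x) ^ 2 * cos ((x + 1) * θ) + (2 * q ^ 2 + 2 * q - 2 * x ^ 2) * cos (x * θ)
          + (q + x) ^ 2 * cos ((x - 1) * θ)) / 2 := by
  have hx (θ : ℝ) : HasDerivAt (fun θ => x * θ) x θ := by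
    simpa using (hasDerivAt_id θ).const_mul x
  have h1 : deriv (fun θ => cos (x * θ)) = fun θ => -sin (x * θ) * x :=
    funext fun θ => ((hx θ).cos).deriv
  have h2 : deriv (fun θ => -sin (x * θ) * x) θ = -(cos (x * θ) * x) * x :=
    (((hx θ).sin).neg.mul_const x).deriv
  rw [symbolOp, h1, h2, add_mul x 1 θ, sub_mul x 1 θ, one_mul, cos_add, cos_sub]
  ring

lemma symbolOp_one_add_cos_pow (q θ : ℝ) (k : ℕ) :
    symbolOp q (fun θ => (1 + cos θ) ^ k) θ
      = (q - k) ^ 2 * (1 + cos θ) ^ (k + 1) + (4 * k * (q - k) + k + q) * (1 + cos θ) ^ k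
        + 2 * k * (2 * k - 1) * (1 + cos θ) ^ (k - 1) := by
  have hc (θ : ℝ) : HasDerivAt (fun θ => 1 + cos θ) (-sin θ) θ :=
    (hasDerivAt_cos θ).const_add 1
  have h1 : deriv (fun θ => (1 + cos θ) ^ k)
      = fun θ => k * (1 + cos θ) ^ (k - 1) * -sin θ :=
    funext fun θ => ((hc θ).pow k).deriv
  have h2 : deriv (fun θ => k * (1 + cos θ) ^ (k - 1) * -sin θ) θ
      = k * ((k - 1 : ℕ) * (1 + cos θ) ^ (k - 1 - 1) * -sin θ) * -sin θ
        + k * (1 + cos θ) ^ (k - 1) * -cos θ :=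
    ((((hc θ).pow (k - 1)).const_mul (k : ℝ)).mul (hasDerivAt_sin θ).neg).deriv
  have hs : sin θ ^ 2 = 1 - cos θ ^ 2 := sin_sq θ
  rw [symbolOp, h1, h2]
  rcases k with _ | _ | k
  · push_cast; ring
  · push_cast; linear_combination 2 * q * hs
  · simp only [Nat.add_sub_cancel]
    push_cast
    linear_combination (2 * q * (k + 2) * (1 + cos θ) ^ (k + 1)
      + (1 - cos θ) * (k + 2) * (k + 1) * (1 + cos θ) ^ k) * hs

noncomputable def massCoeff (p : ℕ) (l : ℤ) : ℝ :=
  eulerianNum (2 * p + 1) ((p : ℤ) + l) / (Nat.factorial (2 * p + 1) : ℝ)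

lemma massCoeff_eq_zero {p : ℕ} {l : ℤ} (hl : (p : ℤ) < |l|) : massCoeff p l = 0 := by
  rcases lt_abs.1 hl with hl | hl
  · rw [massCoeff, eulerianNum_of_le (by omega) (by push_cast; omega), zero_div]
  · rw [massCoeff, eulerianNum_of_neg (by omega), zero_div]

lemma massCoeff_succ (p : ℕ) (l : ℤ) :
    2 * ((p : ℝ) + 1) * (2 * p + 3) * massCoeff (p + 1) l
      = ((p : ℝ) + 2 - l) ^ 2 * massCoeff p (l - 1)
        + (2 * ((p : ℝ) + 1) ^ 2 + 2 * (p + 1) - 2 * l ^ 2) * massCoeff p l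
        + ((p : ℝ) + 2 + l) ^ 2 * massCoeff p (l + 1) := by
  have hfac : ((2 * (p + 1) + 1).factorial : ℝ)
      = (2 * p + 3) * (2 * (p + 1)) * (2 * p + 1).factorial := by
    rw [show 2 * (p + 1) + 1 = 2 * p + 1 + 1 + 1 by ring, Nat.factorial_succ, Nat.factorial_succ]
    push_cast
    ring
  have hE := eulerianNum_add_two (2 * p + 1) ((p : ℤ) + 1 + l)
  rw [show 2 * p + 1 + 2 = 2 * (p + 1) + 1 by ring] at hE
  simp only [massCoeff, hfac, Nat.cast_add, Nat.cast_one, hE]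
  rw [show (p : ℤ) + 1 + l - 2 = p + (l - 1) by ring, show (p : ℤ) + 1 + l - 1 = p + l by ring,
    show (p : ℤ) + 1 + l = p + (l + 1) by ring]
  field_simp
  push_cast
  ring

lemma massSymbol_eq_sum_Icc {p N : ℕ} (hN : p ≤ N) (θ : ℝ) :
    massSymbol p θ = ∑ l ∈ Icc (-(N : ℤ)) N, massCoeff p l * cos (l * θ) := by
  refine sum_subset (Icc_subset_Icc (by omega) (by omega)) fun l _ hl => ?_
  rw [mem_Icc] at hl
  change massCoeff p l * _ = 0
  rw [massCoeff_eq_zero (lt_abs.2 (by omega)), zero_mul]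

lemma symbolOp_massSymbol (p : ℕ) (θ : ℝ) :
    symbolOp (p + 1) (massSymbol p) θ = (p + 1) * (2 * p + 3) * massSymbol (p + 1) θ := by
  set a := massCoeff p
  set I := Icc (-((p + 1 : ℕ) : ℤ)) (p + 1 : ℕ)
  have vanish {l : ℤ} (hl : (p : ℤ) < l ∨ (p : ℤ) < -l) {c d : ℝ} : c * a l * d = 0 := by
    rw [show a l = 0 from massCoeff_eq_zero (lt_abs.2 hl), mul_zero, zero_mul]
  let down : ℤ → ℝ := fun l => ((p : ℝ) + 2 - l) ^ 2 * a (l - 1) * cos (l * θ)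
  let diag : ℤ → ℝ := fun l => (2 * ((p : ℝ) + 1) ^ 2 + 2 * (p + 1) - 2 * l ^ 2) * a l * cos (l * θ)
  let up : ℤ → ℝ := fun l => ((p : ℝ) + 2 + l) ^ 2 * a (l + 1) * cos (l * θ)
  calc symbolOp (p + 1) (massSymbol p) θ
      = ∑ l ∈ I, a l * symbolOp (p + 1) (fun θ => cos (l * θ)) θ := by
        rw [funext (massSymbol_eq_sum_Icc p.le_succ), symbolOp_sum _ _ _ fun l _ => by fun_prop]
    _ = (∑ l ∈ I, down (l + 1) + ∑ l ∈ I, diag l + ∑ l ∈ I, up (l - 1)) / 2 := by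
        rw [← sum_add_distrib, ← sum_add_distrib, sum_div]
        refine sum_congr rfl fun l _ => ?_
        simp only [symbolOp_cos_mul, down, diag, up, add_sub_cancel_right, sub_add_cancel]
        push_cast
        ring
    _ = (∑ l ∈ I, down l + ∑ l ∈ I, diag l + ∑ l ∈ I, up l) / 2 := by
        rw [sum_Icc_comp_add_one down (vanish (by omega)) (vanish (by omega)),
          sum_Icc_comp_sub_one up (vanish (by omega)) (vanish (by omega))]
    _ = ∑ l ∈ I, (p + 1) * (2 * p + 3) * (massCoeff (p + 1) l * cos (l * θ)) := by
        rw [← sum_add_distrib, ← sum_add_distrib, sum_div]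
        refine sum_congr rfl fun l _ => ?_
        linear_combination (-cos (l * θ) / 2) * massCoeff_succ p l
    _ = (p + 1) * (2 * p + 3) * massSymbol (p + 1) θ := by
        rw [← mul_sum]
        rfl

noncomputable def cosPolyCoeff : ℕ → ℕ → ℝ
  | 0, k => if k = 0 then 1 else 0
  | p + 1, k =>
      (2 * ((k : ℝ) + 1) * (2 * k + 1) * cosPolyCoeff p (k + 1)
        + (4 * k * ((p : ℝ) + 1 - k) + k + p + 1) * cosPolyCoeff p k
        + if k = 0 then 0 else ((p : ℝ) + 2 - k) ^ 2 * cosPolyCoeff p (k - 1))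
      / ((p + 1) * (2 * p + 3))

lemma cosPolyCoeff_succ (p k : ℕ) :
    ((p : ℝ) + 1) * (2 * p + 3) * cosPolyCoeff (p + 1) k
      = 2 * ((k : ℝ) + 1) * (2 * k + 1) * cosPolyCoeff p (k + 1)
        + (4 * k * ((p : ℝ) + 1 - k) + k + p + 1) * cosPolyCoeff p k
        + if k = 0 then 0 else ((p : ℝ) + 2 - k) ^ 2 * cosPolyCoeff p (k - 1) := by
  rw [cosPolyCoeff, mul_div_cancel₀ _ (by positivity)]

lemma cosPolyCoeff_eq_zero {p k : ℕ} (hk : p < k) : cosPolyCoeff p k = 0 := by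
  induction p generalizing k with
  | zero => exact if_neg hk.ne'
  | succ p ih =>
    rw [cosPolyCoeff, ih (by omega), ih (by omega), if_neg (by omega), ih (by omega)]
    simp

lemma cosPolyCoeff_nonneg (p k : ℕ) : 0 ≤ cosPolyCoeff p k := by
  induction p generalizing k with
  | zero => unfold cosPolyCoeff; split_ifs <;> norm_num
  | succ p ih =>
    have hmid : 0 ≤ (4 * k * ((p : ℝ) + 1 - k) + k + p + 1) * cosPolyCoeff p k := by
      rcases le_or_gt k p with hk | hk
      · have hkp : (k : ℝ) ≤ p := by exact_mod_cast hk
        exact mul_nonneg (by nlinarith) (ih k)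
      · rw [cosPolyCoeff_eq_zero hk, mul_zero]
    rw [cosPolyCoeff]
    have hup := ih (k + 1)
    have hdown := ih (k - 1)
    split_ifs <;> positivity

lemma cosPolyCoeff_zero_pos (p : ℕ) : 0 < cosPolyCoeff p 0 := by
  induction p with
  | zero => norm_num [cosPolyCoeff]
  | succ p ih =>
    rw [cosPolyCoeff, if_pos rfl]
    have h1 := cosPolyCoeff_nonneg p 1
    simp only [CharP.cast_eq_zero, zero_add, mul_one, mul_zero, zero_mul, sub_zero, add_zero]
    positivity

noncomputable def cosPoly (p : ℕ) (x : ℝ) : ℝ :=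
  ∑ k ∈ range (p + 1), cosPolyCoeff p k * x ^ k

lemma cosPoly_eq_sum_range {p N : ℕ} (hN : p < N) (x : ℝ) :
    cosPoly p x = ∑ k ∈ range N, cosPolyCoeff p k * x ^ k :=
  sum_subset (range_subset_range.2 hN) fun k _ hk => by
    rw [cosPolyCoeff_eq_zero (by simpa using hk), zero_mul]

lemma cosPoly_pos (p : ℕ) {x : ℝ} (hx : 0 ≤ x) : 0 < cosPoly p x := by
  rw [cosPoly, sum_range_succ', pow_zero, mul_one]
  have := cosPolyCoeff_zero_pos p
  have := sum_nonneg fun k (_ : k ∈ range p) =>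
    mul_nonneg (cosPolyCoeff_nonneg p (k + 1)) (pow_nonneg hx (k + 1))
  linarith

lemma cosPoly_monotoneOn (p : ℕ) : MonotoneOn (cosPoly p) (Set.Ici 0) :=
  fun _ hx _ _ hxy => sum_le_sum fun k _ =>
    mul_le_mul_of_nonneg_left (pow_le_pow_left₀ hx hxy k) (cosPolyCoeff_nonneg p k)

lemma symbolOp_cosPoly (p : ℕ) (θ : ℝ) :
    symbolOp (p + 1) (fun θ => cosPoly p (1 + cos θ)) θ
      = (p + 1) * (2 * p + 3) * cosPoly (p + 1) (1 + cos θ) := by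
  set b := cosPolyCoeff p
  set x := 1 + cos θ
  have vanish {k : ℕ} (hk : p < k) {c d : ℝ} : c * b k * d = 0 := by
    rw [show b k = 0 from cosPolyCoeff_eq_zero hk, mul_zero, zero_mul]
  let down : ℕ → ℝ := fun k => if k = 0 then 0 else ((p : ℝ) + 2 - k) ^ 2 * b (k - 1) * x ^ k
  let diag : ℕ → ℝ := fun k => (4 * k * ((p : ℝ) + 1 - k) + k + p + 1) * b k * x ^ k
  let up : ℕ → ℝ := fun k => 2 * k * (2 * k - 1) * b k * x ^ (k - 1)
  calc symbolOp (p + 1) (fun θ => cosPoly p (1 + cos θ)) θ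
      = ∑ k ∈ range (p + 2), b k * symbolOp (p + 1) (fun θ => (1 + cos θ) ^ k) θ := by
        simp only [cosPoly_eq_sum_range (by omega : p < p + 2)]
        exact symbolOp_sum _ _ _ (fun k _ => by fun_prop) _ _
    _ = ∑ k ∈ range (p + 2), down (k + 1) + ∑ k ∈ range (p + 2), diag k
          + ∑ k ∈ range (p + 2), up k := by
        rw [← sum_add_distrib, ← sum_add_distrib]
        refine sum_congr rfl fun k _ => ?_
        simp only [symbolOp_one_add_cos_pow, down, diag, up, Nat.add_one_ne_zero, if_false,
          Nat.add_sub_cancel]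
        push_cast
        ring
    _ = ∑ k ∈ range (p + 2), down k + ∑ k ∈ range (p + 2), diag k
          + ∑ k ∈ range (p + 2), up (k + 1) := by
        rw [sum_range_comp_add_one down (if_pos rfl) (by simp only [down]; exact vanish (by omega)),
          sum_range_comp_add_one up (by simp [up]) (vanish (by omega))]
    _ = ∑ k ∈ range (p + 2), (p + 1) * (2 * p + 3) * (cosPolyCoeff (p + 1) k * x ^ k) := by
        rw [← sum_add_distrib, ← sum_add_distrib]
        refine sum_congr rfl fun k _ => ?_
        rw [← mul_assoc, cosPolyCoeff_succ]
        simp only [down, diag, up, Nat.add_sub_cancel]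
        split_ifs <;> push_cast <;> ring
    _ = (p + 1) * (2 * p + 3) * cosPoly (p + 1) (1 + cos θ) := by
        rw [← mul_sum]
        rfl

lemma massSymbol_eq_cosPoly (p : ℕ) (θ : ℝ) : massSymbol p θ = cosPoly p (1 + cos θ) := by
  induction p generalizing θ with
  | zero => simp [massSymbol, cosPoly, cosPolyCoeff, eulerianNum]
  | succ p ih =>
    have h := symbolOp_massSymbol p θ
    rw [funext ih, symbolOp_cosPoly] at h
    exact (mul_left_cancel₀ (by positivity) h).symm

theorem massSymbol_pos_and_monotone_general (p : ℕ) :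
    (∀ θ : ℝ, 0 < massSymbol p θ) ∧
    (∀ θ₁ θ₂ : ℝ, Real.cos θ₁ ≤ Real.cos θ₂ → massSymbol p θ₁ ≤ massSymbol p θ₂) := by
  have h (θ : ℝ) : 0 ≤ 1 + cos θ := by linarith [neg_one_le_cos θ]
  refine ⟨fun θ => ?_, fun θ₁ θ₂ hcos => ?_⟩
  · rw [massSymbol_eq_cosPoly]
    exact cosPoly_pos p (h θ)
  · rw [massSymbol_eq_cosPoly, massSymbol_eq_cosPoly]
    exact cosPoly_monotoneOn p (h θ₁) (h θ₂) (by linarith)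

/-- Lemma 4 of the paper: the symbol of the mass matrix is positive
and monotone in `cos θ`. -/
theorem massSymbol_pos_and_monotone (p : ℕ) (hp : 1 ≤ p) :
    (∀ θ : ℝ, 0 < massSymbol p θ) ∧
    (∀ θ₁ θ₂ : ℝ, Real.cos θ₁ ≤ Real.cos θ₂ → massSymbol p θ₁ ≤ massSymbol p θ₂) :=
  massSymbol_pos_and_monotone_general p
end

section
/- For every integer p ≥ 1: a_{p,j} > 0 for all integers j with 0 ≤ j ≤ p, and a_{p,j} = 0 for all integers j with j < 0 or j > p. -/
/-- The coefficients `a_{p,j}` of the polynomial representation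
`g_p(c) = Σ_{j=0}^{p} a_{p,j} c^j` of the symbol of the periodic B-spline mass matrix:
`a_{1,0} = a_{1,1} = 1/3`, `a_{1,j} = 0` otherwise, and for `p ≥ 2` the recurrence
`a_{p,j} = ((1−j+p)²/(p+2p²))·a_{p−1,j−1} + ((4j(p−j)+j+p)/(p+2p²))·a_{p−1,j}
  + ((2+6j+4j²)/(p+2p²))·a_{p−1,j+1}`. -/
noncomputable def acoef : ℕ → ℤ → ℝ
  | 0, _ => 0
  | 1, j => if j = 0 ∨ j = 1 then 1 / 3 else 0
  | (p + 2), j =>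
      ((1 - (j : ℝ) + ((p : ℝ) + 2)) ^ 2 / (((p : ℝ) + 2) + 2 * ((p : ℝ) + 2) ^ 2)) *
          acoef (p + 1) (j - 1) +
      ((4 * (j : ℝ) * (((p : ℝ) + 2) - (j : ℝ)) + (j : ℝ) + ((p : ℝ) + 2)) /
            (((p : ℝ) + 2) + 2 * ((p : ℝ) + 2) ^ 2)) *
          acoef (p + 1) j +
      ((2 + 6 * (j : ℝ) + 4 * (j : ℝ) ^ 2) / (((p : ℝ) + 2) + 2 * ((p : ℝ) + 2) ^ 2)) *
          acoef (p + 1) (j + 1)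

/-- the coefficients `a_{p,j}` are positive for `0 ≤ j ≤ p`
and vanish otherwise. -/
theorem acoef_pos_in_range_and_zero_outside (p : ℕ) (hp : 1 ≤ p) :
    (∀ j : ℤ, 0 ≤ j → j ≤ (p : ℤ) → 0 < acoef p j) ∧
    (∀ j : ℤ, j < 0 ∨ (p : ℤ) < j → acoef p j = 0) := by
  induction p, hp using Nat.le_induction with
  | base =>
    constructor
    · intro j h0 h1
      have : j = 0 ∨ j = 1 := by omega
      simp [acoef, this]
    · intro j hj
      have : ¬ (j = 0 ∨ j = 1) := by omega
      simp [acoef, this]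
  | succ n hn IH =>
    obtain ⟨m, rfl⟩ : ∃ m, n = m + 1 := ⟨n - 1, by omega⟩
    obtain ⟨pos, zero⟩ := IH
    have nonneg : ∀ k : ℤ, 0 ≤ acoef (m + 1) k := by
      intro k
      rcases lt_trichotomy k 0 with h | h | h
      · exact le_of_eq (zero k (Or.inl h)).symm
      · exact le_of_lt (pos k (by omega) (by omega))
      · rcases le_or_gt k ((m : ℤ) + 1) with h2 | h2
        · exact le_of_lt (pos k (by omega) (by push_cast; omega))
        · exact le_of_eq (zero k (Or.inr (by push_cast; omega))).symm
    have hD : (0 : ℝ) < ((m : ℝ) + 2) + 2 * ((m : ℝ) + 2) ^ 2 := by positivity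
    constructor
    · intro j h0 h1
      have hj0 : (0 : ℝ) ≤ (j : ℝ) := by exact_mod_cast h0
      have hj1 : (j : ℝ) ≤ (m : ℝ) + 2 := by
        have : (j : ℝ) ≤ ((m : ℤ) + 2 : ℤ) := by exact_mod_cast (by push_cast at h1 ⊢; omega : j ≤ (m : ℤ) + 2)
        push_cast at this; linarith
      show 0 < acoef (m + 2) j
      rw [acoef]
      have c1 : (0 : ℝ) ≤ (1 - (j : ℝ) + ((m : ℝ) + 2)) ^ 2 / (((m : ℝ) + 2) + 2 * ((m : ℝ) + 2) ^ 2) :=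
        div_nonneg (sq_nonneg _) hD.le
      have c2 : (0 : ℝ) < (4 * (j : ℝ) * (((m : ℝ) + 2) - (j : ℝ)) + (j : ℝ) + ((m : ℝ) + 2)) /
          (((m : ℝ) + 2) + 2 * ((m : ℝ) + 2) ^ 2) := by
        apply div_pos _ hD
        nlinarith [mul_nonneg hj0 (by linarith : (0:ℝ) ≤ ((m : ℝ) + 2) - (j : ℝ))]
      have c3 : (0 : ℝ) < (2 + 6 * (j : ℝ) + 4 * (j : ℝ) ^ 2) /
          (((m : ℝ) + 2) + 2 * ((m : ℝ) + 2) ^ 2) := by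
        apply div_pos _ hD; nlinarith
      rcases eq_or_lt_of_le h1 with he | hlt
      · -- j = m + 2
        have hjm : j = (m : ℤ) + 2 := by push_cast at he ⊢; omega
        have z1 : acoef (m + 1) j = 0 := zero j (Or.inr (by push_cast; omega))
        have z2 : acoef (m + 1) (j + 1) = 0 := zero (j + 1) (Or.inr (by push_cast; omega))
        have p1 : 0 < acoef (m + 1) (j - 1) := pos (j - 1) (by omega) (by push_cast; omega)
        have c1' : (0 : ℝ) < (1 - (j : ℝ) + ((m : ℝ) + 2)) ^ 2 / (((m : ℝ) + 2) + 2 * ((m : ℝ) + 2) ^ 2) := by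
          apply div_pos _ hD
          have : (j : ℝ) = (m : ℝ) + 2 := by rw [hjm]; push_cast; ring
          rw [this]; norm_num
        rw [z1, z2]
        have := mul_pos c1' p1
        linarith
      · -- 0 ≤ j ≤ m + 1
        have p2 : 0 < acoef (m + 1) j := pos j h0 (by push_cast at hlt ⊢; omega)
        have t1 := mul_nonneg c1 (nonneg (j - 1))
        have t2 := mul_pos c2 p2
        have t3 := mul_nonneg c3.le (nonneg (j + 1))
        linarith
    · intro j hj
      show acoef (m + 2) j = 0
      rw [acoef]
      rcases hj with hj | hj
      · have z1 : acoef (m + 1) (j - 1) = 0 := zero _ (Or.inl (by omega))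
        have z2 : acoef (m + 1) j = 0 := zero _ (Or.inl hj)
        rcases eq_or_lt_of_le (by omega : j ≤ -1) with he | hlt
        · have hjr : (j : ℝ) = -1 := by rw [he]; norm_num
          rw [z1, z2, hjr]
          norm_num
        · have z3 : acoef (m + 1) (j + 1) = 0 := zero _ (Or.inl (by omega))
          rw [z1, z2, z3]; ring
      · have hj' : ((m : ℤ) + 1) < j - 1 := by push_cast at hj ⊢; omega
        have z1 : acoef (m + 1) (j - 1) = 0 := zero _ (Or.inr (by push_cast at hj' ⊢; omega))
        have z2 : acoef (m + 1) j = 0 := zero _ (Or.inr (by push_cast at hj ⊢; omega))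
        have z3 : acoef (m + 1) (j + 1) = 0 := zero _ (Or.inr (by push_cast at hj ⊢; omega))
        rw [z1, z2, z3]; ring
end

section
/- Let p ≥ 1 be an integer and let h > 0 be such that 2/h is a positive integer and h·p < 1. Let u ∈ H¹(−1,1) with u(−1) = u(1), and suppose w ∈ Ŝ_{p,h}(−1,1) satisfies the Galerkin orthogonality condition (w, v)_{H¹∘} = (u, v)_{H¹∘} for all v ∈ Ŝ_{p,h}(−1,1). Then ‖u − w‖_{L²(−1,1)} ≤ √2 · h · |u|_{H¹(−1,1)}. -/
/-!
Write `e = u - w` and `f = g - w'`. Testing the Galerkin identity with `v = 1` and `v = w` shows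
that `e` has mean zero, that `f` is L²-orthogonal to the derivatives of all periodic splines of
degree `p`, and that `‖f‖ ≤ ‖g‖`. By induction on `p`, every periodic `H¹` function `e` whose
derivative `f` is orthogonal in this sense satisfies `‖e - c‖² ≤ h²/2 ‖f‖²` for some constant `c`:
* for `p = 1`, testing with the primitives of `𝟙_cell - 1/n` shows that `f` has zero integral
  over every grid cell, so `e - e(a)` vanishes at all knots, and a Poincaré inequality on each
  cell applies;
* for `p + 1`, the primitive of a mean-free periodic spline of degree `p` is a periodic spline of
  degree `p + 1`, so integrating by parts makes `e₀ = e - ⨍ e` orthogonal to the derivatives of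
  degree-`p` splines. The induction hypothesis bounds the primitive `E` of `e₀`, and the duality
  identity `‖e₀‖² = -∫ f (E - c)` with Cauchy–Schwarz turns this into `‖e₀‖² ≤ h²/2 ‖f‖²`.
As `e` has mean zero, `‖e‖ ≤ ‖e - c‖`, hence `‖u - w‖ ≤ (h / √2) ‖g‖`.
-/

open MeasureTheory Set

/-- The `L²(a,b)` norm of a function. -/
noncomputable def L2 (a b : ℝ) (v : ℝ → ℝ) : ℝ :=
  Real.sqrt (∫ x in Set.Ioo a b, v x ^ 2)

/-- `u` belongs to the spline space `S_{p,h}(a,b)` of maximum smoothness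
(`u` is `(p-1)`-times continuously differentiable on `[a,b]` and coincides with a
polynomial of degree at most `p` on each of the `n = (b-a)/h` subintervals). -/
def IsSplineOn (p n : ℕ) (h a b : ℝ) (u : ℝ → ℝ) : Prop :=
  ContDiffOn ℝ (p - 1 : ℕ) u (Set.Icc a b) ∧
  ∀ j < n, ∃ P : Polynomial ℝ, P.natDegree ≤ p ∧
    ∀ x ∈ Set.Icc (a + j * h) (a + (j + 1) * h), u x = P.eval x

/-- `u ∈ H¹(a,b)` with weak derivative `g`: `u` is absolutely continuous on `[a,b]`
(an indefinite integral of the locally integrable `g`) and `g` is square-integrable. -/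
def IsH1On (a b : ℝ) (u g : ℝ → ℝ) : Prop :=
  IntervalIntegrable g volume a b ∧
  (∀ x ∈ Set.Icc a b, u x = u a + ∫ t in a..x, g t) ∧
  IntegrableOn (fun x => g x ^ 2) (Set.Ioo a b)

/-- The periodic spline space `Ŝ_{p,h}(a,b)`: splines whose derivatives up to
order `p-1` agree at the two endpoints. -/
def IsPeriodicSplineOn (p n : ℕ) (h a b : ℝ) (u : ℝ → ℝ) : Prop :=
  IsSplineOn p n h a b u ∧
  ∀ l < p, iteratedDerivWithin l u (Set.Icc a b) a = iteratedDerivWithin l u (Set.Icc a b) b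

section MeasureSpace

variable {α : Type*} [MeasurableSpace α] {μ : Measure α} {f g : α → ℝ}

theorem sq_integral_mul_le (hf : MemLp f 2 μ) (hg : MemLp g 2 μ) :
    (∫ x, f x * g x ∂μ) ^ 2 ≤ (∫ x, f x ^ 2 ∂μ) * ∫ x, g x ^ 2 ∂μ := by
  have inner_toLp : ∀ {φ ψ : α → ℝ} (hφ : MemLp φ 2 μ) (hψ : MemLp ψ 2 μ),
      inner ℝ (hφ.toLp φ) (hψ.toLp ψ) = ∫ x, φ x * ψ x ∂μ := by
    intro φ ψ hφ hψ
    rw [L2.inner_def]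
    refine integral_congr_ae ?_
    filter_upwards [hφ.coeFn_toLp, hψ.coeFn_toLp] with x hφx hψx
    simp [hφx, hψx, mul_comm]
  simpa only [inner_toLp, sq] using real_inner_mul_inner_self_le (hf.toLp f) (hg.toLp g)

theorem integral_sq_le_integral_add_const_sq [IsFiniteMeasure μ] (hf : MemLp f 2 μ)
    (hmean : ∫ x, f x ∂μ = 0) (c : ℝ) : ∫ x, f x ^ 2 ∂μ ≤ ∫ x, (f x + c) ^ 2 ∂μ := by
  have hsq := hf.integrable_sq
  have hlin : Integrable (fun x => 2 * f x * c) μ :=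
    ((hf.integrable one_le_two).const_mul 2).mul_const c
  have hexpand : ∫ x, (f x + c) ^ 2 ∂μ =
      ∫ x, f x ^ 2 ∂μ + 2 * c * ∫ x, f x ∂μ + c ^ 2 * μ.real univ := by
    simp_rw [add_sq]
    rw [integral_add (hsq.fun_add hlin) (integrable_const _), integral_add hsq hlin,
      integral_const, integral_mul_const, integral_const_mul, smul_eq_mul]
    ring
  rw [hexpand, hmean]
  nlinarith [sq_nonneg c, measureReal_nonneg (μ := μ) (s := univ)]

theorem integral_sub_sq_le_integral_sq {φ : α → ℝ} (hg : MemLp g 2 μ) (hφ : MemLp φ 2 μ)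
    (horth : ∫ x, (g x - φ x) * φ x ∂μ = 0) : ∫ x, (g x - φ x) ^ 2 ∂μ ≤ ∫ x, g x ^ 2 ∂μ := by
  have hsq : Integrable (fun x => (g x - φ x) ^ 2) μ := (hg.sub hφ).integrable_sq
  have hmul : Integrable (fun x => 2 * ((g x - φ x) * φ x)) μ :=
    ((hg.sub hφ).integrable_mul hφ).const_mul 2
  have hexpand : ∫ x, g x ^ 2 ∂μ =
      ∫ x, (g x - φ x) ^ 2 ∂μ + ∫ x, 2 * ((g x - φ x) * φ x) ∂μ + ∫ x, φ x ^ 2 ∂μ := by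
    rw [← integral_add hsq hmul, ← integral_add (hsq.fun_add hmul) hφ.integrable_sq]
    congr 1 with x
    ring
  rw [hexpand, integral_const_mul, horth]
  linarith [integral_nonneg (f := fun x => φ x ^ 2) (μ := μ) fun x => sq_nonneg (φ x)]

theorem integral_mul_indicator_one_sub {S I : Set α} (hI : MeasurableSet I) (hIS : I ⊆ S)
    (hf : IntegrableOn f S μ) (c : ℝ) :
    ∫ x in S, f x * (I.indicator 1 x - c) ∂μ = ∫ x in I, f x ∂μ - c * ∫ x in S, f x ∂μ := by
  have hpt : ∀ x, f x * (I.indicator 1 x - c) = I.indicator f x - c * f x := by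
    intro x
    by_cases hx : x ∈ I <;> simp [hx] <;> ring
  simp_rw [hpt]
  rw [integral_sub (hf.indicator hI) (hf.const_mul c), integral_const_mul,
    setIntegral_indicator hI, inter_eq_right.2 hIS]

end MeasureSpace

section Interval

variable {a b : ℝ} {f ρ : ℝ → ℝ}

theorem integral_Ioo_eq_intervalIntegral (hab : a ≤ b) :
    ∫ x in Ioo a b, f x = ∫ x in a..b, f x := by
  rw [intervalIntegral.integral_of_le hab, integral_Ioc_eq_integral_Ioo]

theorem MeasureTheory.MemLp.intervalIntegrable (hab : a ≤ b)
    (hf : MemLp f 2 (volume.restrict (Ioo a b))) : IntervalIntegrable f volume a b :=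
  (intervalIntegrable_iff_integrableOn_Ioo_of_le hab).2 (hf.integrable one_le_two)

theorem ContinuousOn.memLp_two (hf : ContinuousOn f (Icc a b)) :
    MemLp f 2 (volume.restrict (Ioo a b)) :=
  (memLp_two_iff_integrable_sq ((hf.mono Ioo_subset_Icc_self).aestronglyMeasurable
    measurableSet_Ioo)).2 ((hf.pow 2).integrableOn_Icc.mono_set Ioo_subset_Icc_self)

theorem ContinuousOn.hasDerivWithinAt_primitive {x : ℝ} (hf : ContinuousOn f (Icc a b))
    (hx : x ∈ Icc a b) : HasDerivWithinAt (fun x => ∫ t in a..x, f t) (f x) (Icc a b) x := by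
  have : Fact (x ∈ Icc a b) := ⟨hx⟩
  exact intervalIntegral.integral_hasDerivWithinAt_right
    (hf.mono (uIcc_of_le hx.1 ▸ Icc_subset_Icc_right hx.2)).intervalIntegrable
    (hf.stronglyMeasurableAtFilter_nhdsWithin measurableSet_Icc x) (hf x hx)

theorem ae_deriv_primitive_eq (hf : IntervalIntegrable f volume a b) :
    ∀ᵐ x ∂volume.restrict (Ioo a b), deriv (fun x => ∫ t in a..x, f t) x = f x := by
  rw [ae_restrict_iff' measurableSet_Ioo]
  filter_upwards [hf.ae_hasDerivAt_integral] with x hx hxab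
  exact (hx (Ioo_subset_Icc_self.trans Icc_subset_uIcc hxab) a left_mem_uIcc).deriv

theorem integral_primitive_mul_add_integral_mul_primitive (hf : IntervalIntegrable f volume a b)
    (hρ : IntervalIntegrable ρ volume a b) :
    (∫ x in a..b, (∫ t in a..x, f t) * ρ x) + (∫ x in a..b, f x * ∫ t in a..x, ρ t) =
      (∫ x in a..b, f x) * ∫ x in a..b, ρ x := by
  have hF := hf.absolutelyContinuousOnInterval_intervalIntegral (c := a) left_mem_uIcc
  have hR := hρ.absolutelyContinuousOnInterval_intervalIntegral (c := a) left_mem_uIcc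
  have hparts := hF.integral_deriv_mul_eq_sub hR
  simp only [intervalIntegral.integral_same, mul_zero, sub_zero] at hparts
  rw [← hparts, ← intervalIntegral.integral_add (hρ.continuousOn_mul hF.continuousOn)
    (hf.mul_continuousOn hR.continuousOn)]
  refine intervalIntegral.integral_congr_ae ?_
  filter_upwards [hf.ae_hasDerivAt_integral, hρ.ae_hasDerivAt_integral] with x hfx hρx hx
  have hx' : x ∈ uIcc a b := uIoc_subset_uIcc hx
  rw [(hfx hx' a left_mem_uIcc).deriv, (hρx hx' a left_mem_uIcc).deriv]
  ring

theorem intervalIntegral_sq_primitive_le (hab : a ≤ b) (hf : IntervalIntegrable f volume a b)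
    (hf2 : IntervalIntegrable (fun x => f x ^ 2) volume a b) :
    ∫ x in a..b, (∫ t in a..x, f t) ^ 2 ≤ (b - a) ^ 2 / 2 * ∫ x in a..b, f x ^ 2 := by
  have hpt : ∀ x ∈ Icc a b, (∫ t in a..x, f t) ^ 2 ≤ (x - a) * ∫ x in a..b, f x ^ 2 := by
    intro x hx
    have hsub : Ioc a x ⊆ Ioc a b := Ioc_subset_Ioc_right hx.2
    have hfx : MemLp f 2 (volume.restrict (Ioc a x)) :=
      (memLp_two_iff_integrable_sq (hf.1.mono_set hsub).aestronglyMeasurable).2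
        (hf2.1.mono_set hsub)
    have hcs := sq_integral_mul_le hfx (memLp_const (1 : ℝ))
    simp only [mul_one, one_pow, integral_const, smul_eq_mul, measureReal_restrict_apply_univ,
      Real.volume_real_Ioc_of_le hx.1] at hcs
    have hmono : ∫ t in Ioc a x, f t ^ 2 ≤ ∫ t in Ioc a b, f t ^ 2 :=
      setIntegral_mono_set hf2.1 (ae_of_all _ fun _ => sq_nonneg _) hsub.eventuallyLE
    rw [intervalIntegral.integral_of_le hx.1, intervalIntegral.integral_of_le hab]
    nlinarith [hx.1]
  have hF := intervalIntegral.continuousOn_primitive_interval' hf left_mem_uIcc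
  calc ∫ x in a..b, (∫ t in a..x, f t) ^ 2
      ≤ ∫ x in a..b, (x - a) * ∫ x in a..b, f x ^ 2 :=
        intervalIntegral.integral_mono_on hab (hF.pow 2).intervalIntegrable
          (((continuous_sub_right a).mul continuous_const).intervalIntegrable _ _) hpt
    _ = (b - a) ^ 2 / 2 * ∫ x in a..b, f x ^ 2 := by
        rw [intervalIntegral.integral_mul_const, intervalIntegral.integral_comp_sub_right
          (fun x => x), integral_id]
        ring

end Interval

namespace IsH1On

variable {a b : ℝ} {u v g k : ℝ → ℝ}

theorem memLp (hu : IsH1On a b u g) : MemLp g 2 (volume.restrict (Ioo a b)) :=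
  (memLp_two_iff_integrable_sq (hu.1.1.mono_set Ioo_subset_Ioc_self).aestronglyMeasurable).2 hu.2.2

theorem continuousOn (hab : a ≤ b) (hu : IsH1On a b u g) : ContinuousOn u (Icc a b) := by
  have hprim := intervalIntegral.continuousOn_primitive_interval' hu.1 left_mem_uIcc
  rw [uIcc_of_le hab] at hprim
  exact (continuousOn_const.add hprim).congr fun x hx => hu.2.1 x hx

theorem integral_eq_sub (hab : a ≤ b) (hu : IsH1On a b u g) :
    ∫ x in Ioo a b, g x = u b - u a := by
  rw [integral_Ioo_eq_intervalIntegral hab, hu.2.1 b ⟨hab, le_rfl⟩]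
  ring

theorem sub (hab : a ≤ b) (hu : IsH1On a b u g) (hv : IsH1On a b v k) :
    IsH1On a b (fun x => u x - v x) (fun x => g x - k x) := by
  refine ⟨hu.1.sub hv.1, fun x hx => ?_, (hu.memLp.sub hv.memLp).integrable_sq⟩
  have hsub : uIcc a x ⊆ uIcc a b := by
    rw [uIcc_of_le hx.1, uIcc_of_le hab]
    exact Icc_subset_Icc_right hx.2
  rw [intervalIntegral.integral_sub (hu.1.mono_set hsub) (hv.1.mono_set hsub)]
  simp only [hu.2.1 x hx, hv.2.1 x hx]
  ring

theorem sub_const (hu : IsH1On a b u g) (c : ℝ) : IsH1On a b (fun x => u x - c) g :=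
  ⟨hu.1, fun x hx => by simp only [hu.2.1 x hx]; ring, hu.2.2⟩

theorem integral_mul_add_integral_mul (hab : a ≤ b) (hu : IsH1On a b u g)
    (hv : IsH1On a b v k) :
    (∫ x in Ioo a b, u x * k x) + ∫ x in Ioo a b, g x * v x = u b * v b - u a * v a := by
  have hparts := integral_primitive_mul_add_integral_mul_primitive hu.1 hv.1
  have hu_eq : ∫ x in a..b, u x * k x =
      ∫ x in a..b, (u a * k x + (∫ t in a..x, g t) * k x) := by
    refine intervalIntegral.integral_congr fun x hx => ?_
    rw [uIcc_of_le hab] at hx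
    simp only [hu.2.1 x hx]
    ring
  have hv_eq : ∫ x in a..b, g x * v x =
      ∫ x in a..b, (v a * g x + g x * ∫ t in a..x, k t) := by
    refine intervalIntegral.integral_congr fun x hx => ?_
    rw [uIcc_of_le hab] at hx
    simp only [hv.2.1 x hx]
    ring
  rw [integral_Ioo_eq_intervalIntegral hab, integral_Ioo_eq_intervalIntegral hab, hu_eq, hv_eq,
    intervalIntegral.integral_add (hv.1.const_mul _) (hv.1.continuousOn_mul
      (intervalIntegral.continuousOn_primitive_interval' hu.1 left_mem_uIcc)),
    intervalIntegral.integral_add (hu.1.const_mul _) (hu.1.mul_continuousOn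
      (intervalIntegral.continuousOn_primitive_interval' hv.1 left_mem_uIcc)),
    intervalIntegral.integral_const_mul, intervalIntegral.integral_const_mul,
    hu.2.1 b ⟨hab, le_rfl⟩, hv.2.1 b ⟨hab, le_rfl⟩]
  linear_combination hparts

end IsH1On

theorem MeasureTheory.MemLp.isH1On_primitive {a b : ℝ} {f : ℝ → ℝ} (hab : a ≤ b)
    (hf : MemLp f 2 (volume.restrict (Ioo a b))) : IsH1On a b (fun x => ∫ t in a..x, f t) f :=
  ⟨hf.intervalIntegrable hab, fun _ _ => by simp, hf.integrable_sq⟩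

section Grid

variable {a b h : ℝ} {n : ℕ}

theorem le_of_sub_eq_natCast_mul (hh : 0 < h) (hgrid : b - a = n * h) : a ≤ b := by
  nlinarith [(Nat.cast_nonneg n : (0 : ℝ) ≤ n)]

theorem grid_mem_Icc (hh : 0 < h) (hgrid : b - a = n * h) {j : ℕ} (hj : j ≤ n) :
    a + j * h ∈ Icc a b := by
  have : (j : ℝ) ≤ n := by exact_mod_cast hj
  constructor <;> nlinarith

theorem Icc_grid_subset (hh : 0 < h) (hgrid : b - a = n * h) {j : ℕ} (hj : j < n) :
    Icc (a + j * h) (a + (j + 1) * h) ⊆ Icc a b := by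
  have h₁ := grid_mem_Icc hh hgrid (Nat.succ_le_of_lt hj)
  push_cast at h₁
  exact Icc_subset_Icc (grid_mem_Icc hh hgrid hj.le).1 h₁.2

theorem Ioo_grid_subset (hh : 0 < h) (hgrid : b - a = n * h) {j : ℕ} (hj : j < n) :
    Ioo (a + j * h) (a + (j + 1) * h) ⊆ Ioo a b := by
  have hsub := Icc_grid_subset hh hgrid hj
  have hle : a + j * h ≤ a + (j + 1) * h := by nlinarith
  exact Ioo_subset_Ioo (hsub (left_mem_Icc.2 hle)).1 (hsub (right_mem_Icc.2 hle)).2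

theorem indicator_Ioo_grid_of_mem (hh : 0 < h) {i j : ℕ} {x : ℝ}
    (hx : x ∈ Ioo (a + i * h) (a + (i + 1) * h)) :
    (Ioo (a + j * h) (a + (j + 1) * h)).indicator 1 x = if i = j then (1 : ℝ) else 0 := by
  by_cases hij : i = j
  · subst hij
    simp [indicator_of_mem hx]
  · refine (indicator_of_notMem ?_ _).trans (if_neg hij).symm
    rintro ⟨hx₁, hx₂⟩
    rcases Nat.lt_or_gt_of_ne hij with hlt | hlt
    · have : (i : ℝ) + 1 ≤ j := by exact_mod_cast hlt
      nlinarith [hx.2]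
    · have : (j : ℝ) + 1 ≤ i := by exact_mod_cast hlt
      nlinarith [hx.1]

theorem exists_mem_Ico_grid (hh : 0 < h) (hgrid : b - a = n * h) {x : ℝ} (hx : x ∈ Ico a b) :
    ∃ j < n, x ∈ Ico (a + j * h) (a + (j + 1) * h) := by
  have hr : 0 ≤ (x - a) / h := div_nonneg (by linarith [hx.1]) hh.le
  have hlt : (x - a) / h < n := by rw [div_lt_iff₀ hh]; linarith [hx.2]
  have hfloor := Nat.floor_le hr
  have hfloor' := Nat.lt_floor_add_one ((x - a) / h)
  refine ⟨⌊(x - a) / h⌋₊, by exact_mod_cast hfloor.trans_lt hlt, ?_, ?_⟩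
  · rw [le_div_iff₀ hh] at hfloor
    linarith
  · rw [div_lt_iff₀ hh] at hfloor'
    linarith

theorem integrableOn_Icc_of_forall_integrableOn_Ioo (hh : 0 < h) (hgrid : b - a = n * h)
    {φ : ℝ → ℝ} (hφ : ∀ j < n, IntegrableOn φ (Ioo (a + j * h) (a + (j + 1) * h))) :
    IntegrableOn φ (Icc a b) := by
  have hcover : Ico a b ⊆ ⋃ j ∈ Finset.range n, Icc (a + j * h) (a + (j + 1) * h) := by
    intro x hx
    obtain ⟨j, hj, hxj⟩ := exists_mem_Ico_grid hh hgrid hx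
    exact mem_iUnion₂.2 ⟨j, Finset.mem_range.2 hj, Ico_subset_Icc_self hxj⟩
  rw [integrableOn_Icc_iff_integrableOn_Ico]
  refine (integrableOn_finset_iUnion.2 fun j hj => ?_).mono_set hcover
  rw [integrableOn_Icc_iff_integrableOn_Ioo]
  exact hφ j (Finset.mem_range.1 hj)

theorem intervalIntegral_eq_sum_grid (hh : 0 < h) (hgrid : b - a = n * h) {φ : ℝ → ℝ}
    (hφ : IntervalIntegrable φ volume a b) {k : ℕ} (hk : k ≤ n) :
    ∫ x in a..a + k * h, φ x = ∑ i ∈ Finset.range k, ∫ x in a + i * h..a + (i + 1) * h, φ x := by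
  have hcell : ∀ i < k, IntervalIntegrable φ volume (a + i * h) (a + (i + 1) * h) := fun i hi =>
    hφ.mono_set (by
      rw [uIcc_of_le (by nlinarith), uIcc_of_le (le_of_sub_eq_natCast_mul hh hgrid)]
      exact Icc_grid_subset hh hgrid (by omega))
  have hsum := intervalIntegral.sum_integral_adjacent_intervals (a := fun i : ℕ => a + i * h)
    (μ := volume) fun i hi => by push_cast; exact hcell i hi
  push_cast at hsum
  simpa using hsum.symm

end Grid

open Polynomial in
theorem Polynomial.exists_derivative_eq {P : ℝ[X]} {d : ℕ} (hP : P.natDegree ≤ d) :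
    ∃ Q : ℝ[X], Q.derivative = P ∧ Q.natDegree ≤ d + 1 := by
  refine ⟨∑ k ∈ Finset.range (d + 1), C (P.coeff k / (k + 1)) * X ^ (k + 1), ?_,
    natDegree_sum_le_of_forall_le _ _ fun k hk => (natDegree_C_mul_X_pow_le _ _).trans ?_⟩
  · conv_rhs => rw [P.as_sum_range' (d + 1) (Nat.lt_succ_of_le hP)]
    rw [map_sum]
    refine Finset.sum_congr rfl fun k _ => ?_
    rw [derivative_C_mul_X_pow, Nat.add_sub_cancel, C_mul_X_pow_eq_monomial]
    congr 1
    push_cast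
    field_simp
  · simp only [Finset.mem_range] at hk
    omega

theorem exists_polynomial_eq_primitive {s : ℝ → ℝ} {P : Polynomial ℝ} {d : ℕ}
    (hd : P.natDegree ≤ d) {c α β : ℝ} (hs : IntervalIntegrable s volume c α)
    (hP : ∀ x ∈ Ioo α β, s x = P.eval x) :
    ∃ Q : Polynomial ℝ, Q.natDegree ≤ d + 1 ∧ ∀ x ∈ Icc α β, ∫ t in c..x, s t = Q.eval x := by
  obtain ⟨R, hR, hRdeg⟩ := Polynomial.exists_derivative_eq hd
  refine ⟨R + Polynomial.C ((∫ t in c..α, s t) - R.eval α),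
    (Polynomial.natDegree_add_le _ _).trans (by simpa using hRdeg), fun x hx => ?_⟩
  have hae : ∀ᵐ t ∂volume.restrict (uIoc α x), P.eval t = s t := by
    rw [ae_restrict_iff' measurableSet_uIoc]
    filter_upwards [Measure.ae_ne volume β] with t htβ ht
    rw [uIoc_of_le hx.1] at ht
    exact (hP t ⟨ht.1, lt_of_le_of_ne (ht.2.trans hx.2) htβ⟩).symm
  have hαx : ∫ t in α..x, s t = R.eval x - R.eval α := by
    rw [← intervalIntegral.integral_congr_ae ((ae_restrict_iff' measurableSet_uIoc).1 hae)]
    exact intervalIntegral.integral_eq_sub_of_hasDerivAt (fun t _ => hR ▸ R.hasDerivAt t)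
      (P.continuous.intervalIntegrable _ _)
  rw [← intervalIntegral.integral_add_adjacent_intervals hs
    ((P.continuous.intervalIntegrable α x).congr_ae hae), hαx]
  simp only [Polynomial.eval_add, Polynomial.eval_C]
  ring

namespace IsSplineOn

variable {p n : ℕ} {h a b : ℝ} {v : ℝ → ℝ}

theorem exists_hasDerivAt (hv : IsSplineOn p n h a b v) {j : ℕ} (hj : j < n) :
    ∃ P : Polynomial ℝ, ∀ x ∈ Ioo (a + j * h) (a + (j + 1) * h),
      HasDerivAt v (P.derivative.eval x) x := by
  obtain ⟨P, -, hP⟩ := hv.2 j hj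
  refine ⟨P, fun x hx => (P.hasDerivAt x).congr_of_eventuallyEq ?_⟩
  filter_upwards [Ioo_mem_nhds hx.1 hx.2] with y hy using hP y (Ioo_subset_Icc_self hy)

theorem hasDerivAt_deriv (hh : 0 < h) (hgrid : b - a = n * h) (hv : IsSplineOn p n h a b v)
    {x : ℝ} (hx : x ∈ Ioo a b) (hknot : x ∉ range fun j : ℕ => a + j * h) :
    HasDerivAt v (deriv v x) x := by
  obtain ⟨j, hj, hxj⟩ := exists_mem_Ico_grid hh hgrid (Ioo_subset_Ico_self hx)
  obtain ⟨P, hP⟩ := hv.exists_hasDerivAt hj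
  exact (hP x ⟨lt_of_le_of_ne hxj.1 fun e => hknot ⟨j, e⟩, hxj.2⟩).differentiableAt.hasDerivAt

theorem memLp_deriv (hh : 0 < h) (hgrid : b - a = n * h) (hv : IsSplineOn p n h a b v) :
    MemLp (deriv v) 2 (volume.restrict (Ioo a b)) := by
  refine (memLp_two_iff_integrable_sq (measurable_deriv v).aestronglyMeasurable).2 ?_
  refine (integrableOn_Icc_of_forall_integrableOn_Ioo hh hgrid fun j hj => ?_).mono_set
    Ioo_subset_Icc_self
  obtain ⟨P, hP⟩ := hv.exists_hasDerivAt hj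
  refine IntegrableOn.congr_fun ?_ (fun x hx => by rw [(hP x hx).deriv]) measurableSet_Ioo
  exact (P.derivative.continuous.pow 2).continuousOn.integrableOn_Icc.mono_set Ioo_subset_Icc_self

theorem isH1On (hh : 0 < h) (hgrid : b - a = n * h) (hv : IsSplineOn p n h a b v) :
    IsH1On a b v (deriv v) := by
  have hab := le_of_sub_eq_natCast_mul hh hgrid
  have hint := (hv.memLp_deriv hh hgrid).intervalIntegrable hab
  refine ⟨hint, fun x hx => ?_, (hv.memLp_deriv hh hgrid).integrable_sq⟩
  have hsub : uIcc a x ⊆ uIcc a b := by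
    rw [uIcc_of_le hx.1, uIcc_of_le hab]
    exact Icc_subset_Icc_right hx.2
  rw [integral_eq_of_hasDerivAt_off_countable_of_le v (deriv v) hx.1 (countable_range _)
    (hv.1.continuousOn.mono (Icc_subset_Icc_right hx.2))
    (fun y hy => hv.hasDerivAt_deriv hh hgrid ⟨hy.1.1, hy.1.2.trans_le hx.2⟩ hy.2)
    (hint.mono_set hsub)]
  ring

end IsSplineOn

namespace IsPeriodicSplineOn

variable {p n : ℕ} {h a b : ℝ} {v : ℝ → ℝ}

theorem const (c : ℝ) : IsPeriodicSplineOn p n h a b fun _ => c :=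
  ⟨⟨contDiffOn_const, fun _ _ => ⟨Polynomial.C c, by simp, fun _ _ => by simp⟩⟩,
    fun _ _ => by simp [iteratedDerivWithin_const]⟩

theorem sub_const (hv : IsPeriodicSplineOn p n h a b v) (c : ℝ) :
    IsPeriodicSplineOn p n h a b fun x => v x - c := by
  refine ⟨⟨hv.1.1.sub contDiffOn_const, fun j hj => ?_⟩, fun l hl => ?_⟩
  · obtain ⟨P, hdeg, hP⟩ := hv.1.2 j hj
    exact ⟨P - Polynomial.C c, (Polynomial.natDegree_sub_le _ _).trans (by simpa using hdeg),
      fun x hx => by simp [hP x hx]⟩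
  · rcases l.eq_zero_or_pos with rfl | hl0
    · simpa using hv.2 0 hl
    · have hneg_add : (fun x => v x - c) = fun x => -c + v x := funext fun x => by ring
      rw [hneg_add, iteratedDerivWithin_const_add hl0, iteratedDerivWithin_const_add hl0]
      exact hv.2 l hl

theorem apply_left_eq_apply_right (hv : IsPeriodicSplineOn p n h a b v) (hp : 1 ≤ p) :
    v a = v b := by
  simpa using hv.2 0 hp

theorem primitive (hab : a < b) (hh : 0 < h) (hgrid : b - a = n * h) (hp : 1 ≤ p)
    {s : ℝ → ℝ} (hs : IsPeriodicSplineOn p n h a b s) (hmean : ∫ x in Ioo a b, s x = 0) :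
    IsPeriodicSplineOn (p + 1) n h a b fun x => ∫ t in a..x, s t := by
  obtain ⟨q, rfl⟩ : ∃ q, p = q + 1 := ⟨p - 1, by omega⟩
  have hcont : ContinuousOn s (Icc a b) := hs.1.1.continuousOn
  have hderiv : EqOn (derivWithin (fun x => ∫ t in a..x, s t) (Icc a b)) s (Icc a b) :=
    fun x hx => (hcont.hasDerivWithinAt_primitive hx).derivWithin (uniqueDiffOn_Icc hab x hx)
  refine ⟨⟨?_, fun j hj => ?_⟩, fun l hl => ?_⟩
  · show ContDiffOn ℝ ((q + 1 : ℕ) : WithTop ℕ∞) _ _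
    rw [Nat.cast_succ, contDiffOn_succ_iff_derivWithin (uniqueDiffOn_Icc hab)]
    exact ⟨fun x hx => (hcont.hasDerivWithinAt_primitive hx).differentiableWithinAt,
      by simp, hs.1.1.congr hderiv⟩
  · obtain ⟨P, hdeg, hP⟩ := hs.1.2 j hj
    have hj' : a + j * h ∈ Icc a b := grid_mem_Icc hh hgrid hj.le
    exact exists_polynomial_eq_primitive hdeg
      ((hcont.mono (Icc_subset_Icc_right hj'.2)).intervalIntegrable_of_Icc hj'.1)
      fun x hx => hP x (Ioo_subset_Icc_self hx)
  · rcases l with _ | l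
    · simp [← integral_Ioo_eq_intervalIntegral hab.le, hmean]
    · rw [iteratedDerivWithin_succ', iteratedDerivWithin_congr hderiv (left_mem_Icc.2 hab.le),
        iteratedDerivWithin_congr hderiv (right_mem_Icc.2 hab.le)]
      exact hs.2 l (by omega)

end IsPeriodicSplineOn

section BaseCase

variable {a b h : ℝ} {n : ℕ}

theorem exists_periodicSpline_deriv_ae_eq_indicator_sub (hh : 0 < h) (hgrid : b - a = n * h)
    {j : ℕ} (hj : j < n) :
    ∃ v, IsPeriodicSplineOn 1 n h a b v ∧ ∀ᵐ x ∂volume.restrict (Ioo a b),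
      deriv v x = (Ioo (a + j * h) (a + (j + 1) * h)).indicator 1 x - 1 / n := by
  set s : ℝ → ℝ := fun x => (Ioo (a + j * h) (a + (j + 1) * h)).indicator 1 x - 1 / n
  have hab := le_of_sub_eq_natCast_mul hh hgrid
  have hs : IntervalIntegrable s volume a b := by
    refine IntervalIntegrable.sub ?_ intervalIntegrable_const
    rw [intervalIntegrable_iff_integrableOn_Ioc_of_le hab]
    exact (integrableOn_const (by simp)).indicator measurableSet_Ioo
  refine ⟨fun x => ∫ t in a..x, s t, ⟨⟨?_, fun i hi => ?_⟩, fun l hl => ?_⟩,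
    ae_deriv_primitive_eq hs⟩
  · have hcont := intervalIntegral.continuousOn_primitive_interval' hs left_mem_uIcc
    rw [uIcc_of_le hab] at hcont
    exact contDiffOn_zero.2 hcont
  · have hi₀ := grid_mem_Icc hh hgrid hi.le
    have hpiece : ∀ x ∈ Ioo (a + i * h) (a + (i + 1) * h),
        s x = (Polynomial.C ((if i = j then 1 else 0) - 1 / n : ℝ)).eval x := fun x hx => by
      simp only [s, Polynomial.eval_C, indicator_Ioo_grid_of_mem hh hx]
    exact exists_polynomial_eq_primitive (Polynomial.natDegree_C _).le
      (hs.mono_set (by rw [uIcc_of_le hi₀.1, uIcc_of_le hab]; exact Icc_subset_Icc_right hi₀.2))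
      hpiece
  · obtain rfl : l = 0 := by omega
    have hn : (n : ℝ) ≠ 0 := by exact_mod_cast (Nat.zero_lt_of_lt hj).ne'
    have hmean := integral_mul_indicator_one_sub (μ := volume) measurableSet_Ioo
      (Ioo_grid_subset hh hgrid hj) (integrableOn_const (C := (1 : ℝ)) (by simp)) (1 / n)
    simp only [one_mul, integral_const, smul_eq_mul, mul_one, measureReal_restrict_apply_univ,
      Real.volume_real_Ioo_of_le hab, Real.volume_real_Ioo_of_le (by nlinarith :
        a + j * h ≤ a + (j + 1) * h)] at hmean
    simp only [iteratedDerivWithin_zero, intervalIntegral.integral_same]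
    rw [← integral_Ioo_eq_intervalIntegral hab, hmean, hgrid]
    field_simp
    ring

theorem integral_grid_eq_zero_of_orthogonal (hh : 0 < h) (hgrid : b - a = n * h) {f : ℝ → ℝ}
    (hf : IntegrableOn f (Ioo a b)) (hmean : ∫ x in Ioo a b, f x = 0)
    (horth : ∀ v, IsPeriodicSplineOn 1 n h a b v → ∫ x in Ioo a b, f x * deriv v x = 0)
    {j : ℕ} (hj : j < n) : ∫ x in a + j * h..a + (j + 1) * h, f x = 0 := by
  obtain ⟨v, hv, hderiv⟩ := exists_periodicSpline_deriv_ae_eq_indicator_sub hh hgrid hj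
  have h0 := horth v hv
  rw [integral_congr_ae (hderiv.mono fun x hx => by rw [hx]),
    integral_mul_indicator_one_sub measurableSet_Ioo (Ioo_grid_subset hh hgrid hj) hf, hmean,
    mul_zero, sub_zero] at h0
  rw [← integral_Ioo_eq_intervalIntegral (by nlinarith), h0]

theorem integral_sq_primitive_le_of_integral_grid_eq_zero (hh : 0 < h) (hgrid : b - a = n * h)
    {f : ℝ → ℝ} (hf : MemLp f 2 (volume.restrict (Ioo a b)))
    (hzero : ∀ j < n, ∫ x in a + j * h..a + (j + 1) * h, f x = 0) :
    ∫ x in Ioo a b, (∫ t in a..x, f t) ^ 2 ≤ h ^ 2 / 2 * ∫ x in Ioo a b, f x ^ 2 := by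
  have hab := le_of_sub_eq_natCast_mul hh hgrid
  have hb : a + n * h = b := by linarith
  have hf1 := hf.intervalIntegrable hab
  have hf2 : IntervalIntegrable (fun x => f x ^ 2) volume a b :=
    (intervalIntegrable_iff_integrableOn_Ioo_of_le hab).2 hf.integrable_sq
  have hF2 : IntervalIntegrable (fun x => (∫ t in a..x, f t) ^ 2) volume a b :=
    ((intervalIntegral.continuousOn_primitive_interval' hf1 left_mem_uIcc).pow 2).intervalIntegrable
  have hcell : ∀ k < n, uIcc (a + k * h) (a + (k + 1) * h) ⊆ uIcc a b := fun k hk => by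
    rw [uIcc_of_le (by nlinarith), uIcc_of_le hab]
    exact Icc_grid_subset hh hgrid hk
  have hpiece : ∀ k < n, ∫ y in a + k * h..a + (k + 1) * h, (∫ t in a..y, f t) ^ 2 ≤
      h ^ 2 / 2 * ∫ y in a + k * h..a + (k + 1) * h, f y ^ 2 := by
    intro k hk
    have hknot : ∫ t in a..a + k * h, f t = 0 := by
      rw [intervalIntegral_eq_sum_grid hh hgrid hf1 hk.le]
      exact Finset.sum_eq_zero fun i hi => hzero i (by simp only [Finset.mem_range] at hi; omega)
    have hxk : a + k * h ∈ uIcc a b := hcell k hk left_mem_uIcc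
    have hshift : EqOn (fun y => (∫ t in a..y, f t) ^ 2)
        (fun y => (∫ t in a + k * h..y, f t) ^ 2) (uIcc (a + k * h) (a + (k + 1) * h)) := by
      intro y hy
      show (∫ t in a..y, f t) ^ 2 = (∫ t in a + k * h..y, f t) ^ 2
      rw [← intervalIntegral.integral_add_adjacent_intervals
        (hf1.mono_set (uIcc_subset_uIcc left_mem_uIcc hxk))
        (hf1.mono_set (uIcc_subset_uIcc hxk (hcell k hk hy))), hknot, zero_add]
    rw [intervalIntegral.integral_congr hshift]
    have hlen : a + (k + 1) * h - (a + k * h) = h := by ring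
    simpa [hlen] using intervalIntegral_sq_primitive_le (by nlinarith)
      (hf1.mono_set (hcell k hk)) (hf2.mono_set (hcell k hk))
  rw [integral_Ioo_eq_intervalIntegral hab, integral_Ioo_eq_intervalIntegral hab, ← hb,
    intervalIntegral_eq_sum_grid hh hgrid hF2 le_rfl,
    intervalIntegral_eq_sum_grid hh hgrid hf2 le_rfl, Finset.mul_sum]
  exact Finset.sum_le_sum fun k hk => hpiece k (Finset.mem_range.1 hk)

end BaseCase

section Orthogonality

variable {a b h : ℝ} {n p : ℕ} {F f : ℝ → ℝ}

theorem integral_mul_eq_zero_of_orthogonal (hab : a < b) (hh : 0 < h) (hgrid : b - a = n * h)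
    (hp : 1 ≤ p) (hf : MemLp f 2 (volume.restrict (Ioo a b))) (hmean : ∫ x in Ioo a b, f x = 0)
    (horth : ∀ V, IsPeriodicSplineOn (p + 1) n h a b V → ∫ x in Ioo a b, f x * deriv V x = 0)
    {v : ℝ → ℝ} (hv : IsPeriodicSplineOn p n h a b v) : ∫ x in Ioo a b, f x * v x = 0 := by
  set m := ⨍ x in Ioo a b, v x
  have hvc : ContinuousOn v (Icc a b) := hv.1.1.continuousOn
  have hs : IntervalIntegrable (fun x => v x - m) volume a b :=
    (hvc.sub continuousOn_const).intervalIntegrable_of_Icc hab.le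
  have h0 := horth _ ((hv.sub_const m).primitive hab hh hgrid hp
    (integral_sub_average (volume.restrict (Ioo a b)) v))
  rw [integral_congr_ae ((ae_deriv_primitive_eq hs).mono fun x hx => by rw [hx])] at h0
  have hsplit : ∫ x in Ioo a b, f x * (v x - m) =
      (∫ x in Ioo a b, f x * v x) - m * ∫ x in Ioo a b, f x := by
    have hfv : Integrable (fun x => f x * v x) (volume.restrict (Ioo a b)) :=
      hf.integrable_mul hvc.memLp_two
    simp_rw [mul_sub]
    rw [integral_sub hfv ((hf.integrable one_le_two).mul_const m), integral_mul_const, mul_comm]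
  rw [hsplit, hmean, mul_zero, sub_zero] at h0
  exact h0

theorem IsH1On.integral_mul_deriv_eq_zero (hab : a < b) (hh : 0 < h) (hgrid : b - a = n * h)
    (hp : 1 ≤ p) (hF : IsH1On a b F f) (hper : F a = F b)
    (horth : ∀ V, IsPeriodicSplineOn (p + 1) n h a b V → ∫ x in Ioo a b, f x * deriv V x = 0)
    {v : ℝ → ℝ} (hv : IsPeriodicSplineOn p n h a b v) : ∫ x in Ioo a b, F x * deriv v x = 0 := by
  have hparts := hF.integral_mul_add_integral_mul hab.le (hv.1.isH1On hh hgrid)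
  rw [integral_mul_eq_zero_of_orthogonal hab hh hgrid hp hF.memLp
    (by rw [hF.integral_eq_sub hab.le, hper, sub_self]) horth hv, hper,
    hv.apply_left_eq_apply_right hp] at hparts
  linarith

theorem IsH1On.integral_sq_le_of_antiderivative (hab : a ≤ b) {G : ℝ → ℝ}
    (hF : IsH1On a b F f) (hG : IsH1On a b G F) (hFper : F a = F b) (hGper : G a = G b)
    {c K : ℝ} (hK : 0 ≤ K) (hGc : ∫ x in Ioo a b, (G x - c) ^ 2 ≤ K * ∫ x in Ioo a b, F x ^ 2) :
    ∫ x in Ioo a b, F x ^ 2 ≤ K * ∫ x in Ioo a b, f x ^ 2 := by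
  have hGc' := hG.sub_const c
  have hparts := hF.integral_mul_add_integral_mul hab hGc'
  have hcs := sq_integral_mul_le hF.memLp (hGc'.continuousOn hab).memLp_two
  simp only [hFper, hGper, sub_self, ← sq] at hparts
  set X := ∫ x in Ioo a b, F x ^ 2
  set Y := ∫ x in Ioo a b, f x ^ 2
  have hX : 0 ≤ X := setIntegral_nonneg measurableSet_Ioo fun _ _ => sq_nonneg _
  have hY : 0 ≤ Y := setIntegral_nonneg measurableSet_Ioo fun _ _ => sq_nonneg _
  have hsq : X ^ 2 ≤ Y * (K * X) :=
    calc X ^ 2 = (∫ x in Ioo a b, f x * (G x - c)) ^ 2 := by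
          rw [show X = -∫ x in Ioo a b, f x * (G x - c) by linarith, neg_sq]
      _ ≤ Y * ∫ x in Ioo a b, (G x - c) ^ 2 := hcs
      _ ≤ Y * (K * X) := mul_le_mul_of_nonneg_left hGc hY
  nlinarith [mul_nonneg hK hY]

theorem exists_integral_sq_sub_le_of_orthogonal (hab : a < b) (hh : 0 < h)
    (hgrid : b - a = n * h) (hp : 1 ≤ p) (hF : IsH1On a b F f) (hper : F a = F b)
    (horth : ∀ v, IsPeriodicSplineOn p n h a b v → ∫ x in Ioo a b, f x * deriv v x = 0) :
    ∃ c, ∫ x in Ioo a b, (F x - c) ^ 2 ≤ h ^ 2 / 2 * ∫ x in Ioo a b, f x ^ 2 := by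
  induction p, hp using Nat.le_induction generalizing F f with
  | base =>
    have hmean : ∫ x in Ioo a b, f x = 0 := by rw [hF.integral_eq_sub hab.le, hper, sub_self]
    refine ⟨F a, Eq.trans_le ?_ (integral_sq_primitive_le_of_integral_grid_eq_zero hh hgrid
      hF.memLp fun j hj => integral_grid_eq_zero_of_orthogonal hh hgrid
        (hF.memLp.integrable one_le_two) hmean horth hj)⟩
    refine setIntegral_congr_fun measurableSet_Ioo fun x hx => ?_
    simp only [hF.2.1 x (Ioo_subset_Icc_self hx), add_sub_cancel_left]
  | succ p hp ih =>
    set m := ⨍ x in Ioo a b, F x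
    have hF₀ := hF.sub_const m
    have hF₀per : F a - m = F b - m := by rw [hper]
    have hG := (hF₀.continuousOn hab.le).memLp_two.isH1On_primitive hab.le
    have hGper : ∫ t in a..a, (F t - m) = ∫ t in a..b, (F t - m) := by
      rw [intervalIntegral.integral_same, ← integral_Ioo_eq_intervalIntegral hab.le,
        integral_sub_average]
    obtain ⟨c, hc⟩ := ih hG hGper fun v hv =>
      hF₀.integral_mul_deriv_eq_zero hab hh hgrid hp hF₀per horth hv
    exact ⟨m, hF₀.integral_sq_le_of_antiderivative hab.le hG hF₀per hGper (by positivity) hc⟩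

theorem integral_sq_sub_le_of_galerkin (hab : a < b) (hh : 0 < h) (hgrid : b - a = n * h)
    (hp : 1 ≤ p) {u g w : ℝ → ℝ} (hu : IsH1On a b u g) (hper : u a = u b)
    (hw : IsPeriodicSplineOn p n h a b w)
    (hgal : ∀ v : ℝ → ℝ, IsPeriodicSplineOn p n h a b v →
      (∫ x in Ioo a b, deriv w x * deriv v x) + (∫ x in Ioo a b, w x) * (∫ x in Ioo a b, v x) =
        (∫ x in Ioo a b, g x * deriv v x) + (∫ x in Ioo a b, u x) * (∫ x in Ioo a b, v x)) :
    ∫ x in Ioo a b, (u x - w x) ^ 2 ≤ h ^ 2 / 2 * ∫ x in Ioo a b, g x ^ 2 := by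
  have hwH := hw.1.isH1On hh hgrid
  have he := hu.sub hab.le hwH
  have hmean : ∫ x in Ioo a b, w x = ∫ x in Ioo a b, u x := by
    have h1 := hgal _ (IsPeriodicSplineOn.const 1)
    simp only [deriv_const', mul_zero, integral_zero, zero_add, integral_const, smul_eq_mul,
      mul_one, measureReal_restrict_apply_univ, Real.volume_real_Ioo_of_le hab.le] at h1
    exact mul_right_cancel₀ (sub_ne_zero.2 hab.ne') h1
  have horth : ∀ v, IsPeriodicSplineOn p n h a b v →
      ∫ x in Ioo a b, (g x - deriv w x) * deriv v x = 0 := by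
    intro v hv
    have hdv := hv.1.memLp_deriv hh hgrid
    have hgv : Integrable (fun x => g x * deriv v x) (volume.restrict (Ioo a b)) :=
      hu.memLp.integrable_mul hdv
    have hwv : Integrable (fun x => deriv w x * deriv v x) (volume.restrict (Ioo a b)) :=
      hwH.memLp.integrable_mul hdv
    have h1 := hgal v hv
    rw [hmean, add_left_inj] at h1
    simp_rw [sub_mul]
    rw [integral_sub hgv hwv, h1, sub_self]
  obtain ⟨c, hc⟩ := exists_integral_sq_sub_le_of_orthogonal hab hh hgrid hp he
    (by simp only [hper, hw.apply_left_eq_apply_right hp]) horth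
  have he_mean : ∫ x in Ioo a b, (u x - w x) = 0 := by
    rw [integral_sub ((hu.continuousOn hab.le).integrableOn_Icc.mono_set Ioo_subset_Icc_self)
      ((hwH.continuousOn hab.le).integrableOn_Icc.mono_set Ioo_subset_Icc_self), hmean, sub_self]
  calc ∫ x in Ioo a b, (u x - w x) ^ 2
      ≤ ∫ x in Ioo a b, (u x - w x + -c) ^ 2 :=
        integral_sq_le_integral_add_const_sq (he.continuousOn hab.le).memLp_two he_mean (-c)
    _ ≤ h ^ 2 / 2 * ∫ x in Ioo a b, (g x - deriv w x) ^ 2 := by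
        simpa only [← sub_eq_add_neg] using hc
    _ ≤ h ^ 2 / 2 * ∫ x in Ioo a b, g x ^ 2 := mul_le_mul_of_nonneg_left
        (integral_sub_sq_le_integral_sq hu.memLp hwH.memLp (horth w hw)) (by positivity)

end Orthogonality

theorem periodic_H1_projection_error_general (p n : ℕ) (h : ℝ) (hp : 1 ≤ p) (hh : 0 < h)
    (hgrid : (2 : ℝ) = n * h)
    (u g w : ℝ → ℝ) (hu : IsH1On (-1) 1 u g) (hper : u (-1) = u 1)
    (hw : IsPeriodicSplineOn p n h (-1) 1 w)
    (hgal : ∀ v : ℝ → ℝ, IsPeriodicSplineOn p n h (-1) 1 v →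
      (∫ x in Set.Ioo (-1 : ℝ) 1, deriv w x * deriv v x) +
          (∫ x in Set.Ioo (-1 : ℝ) 1, w x) * (∫ x in Set.Ioo (-1 : ℝ) 1, v x) =
        (∫ x in Set.Ioo (-1 : ℝ) 1, g x * deriv v x) +
          (∫ x in Set.Ioo (-1 : ℝ) 1, u x) * (∫ x in Set.Ioo (-1 : ℝ) 1, v x)) :
    L2 (-1) 1 (fun x => u x - w x) ≤ Real.sqrt 2 * h * L2 (-1) 1 g := by
  have hbound := integral_sq_sub_le_of_galerkin (by norm_num) hh (by linarith) hp hu hper hw hgal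
  have hconst : h ^ 2 / 2 ≤ (Real.sqrt 2 * h) ^ 2 := by
    rw [mul_pow, Real.sq_sqrt zero_le_two]
    nlinarith [sq_nonneg h]
  calc L2 (-1) 1 (fun x => u x - w x)
      ≤ Real.sqrt ((Real.sqrt 2 * h) ^ 2 * ∫ x in Ioo (-1 : ℝ) 1, g x ^ 2) :=
        Real.sqrt_le_sqrt (hbound.trans (mul_le_mul_of_nonneg_right hconst
          (setIntegral_nonneg measurableSet_Ioo fun _ _ => sq_nonneg _)))
    _ = Real.sqrt 2 * h * L2 (-1) 1 g := by
        rw [Real.sqrt_mul (sq_nonneg _), Real.sqrt_sq (by positivity), L2]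

/-- Lemma 8 of the paper: approximation error estimate for the
`H¹∘`-orthogonal projection of a periodic `H¹`-function onto the periodic spline space. -/
theorem periodic_H1_projection_error (p n : ℕ) (h : ℝ) (hp : 1 ≤ p) (hh : 0 < h)
    (hn : 0 < n) (hgrid : (2 : ℝ) = n * h) (hhp : h * p < 1)
    (u g w : ℝ → ℝ) (hu : IsH1On (-1) 1 u g) (hper : u (-1) = u 1)
    (hw : IsPeriodicSplineOn p n h (-1) 1 w)
    (hgal : ∀ v : ℝ → ℝ, IsPeriodicSplineOn p n h (-1) 1 v →
      (∫ x in Set.Ioo (-1 : ℝ) 1, deriv w x * deriv v x) +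
          (∫ x in Set.Ioo (-1 : ℝ) 1, w x) * (∫ x in Set.Ioo (-1 : ℝ) 1, v x) =
        (∫ x in Set.Ioo (-1 : ℝ) 1, g x * deriv v x) +
          (∫ x in Set.Ioo (-1 : ℝ) 1, u x) * (∫ x in Set.Ioo (-1 : ℝ) 1, v x)) :
    L2 (-1) 1 (fun x => u x - w x) ≤ Real.sqrt 2 * h * L2 (-1) 1 g :=
  periodic_H1_projection_error_general p n h hp hh hgrid u g w hu hper hw hgal
end

section
/- Let a < b be real numbers, let p ≥ 1 be an integer, and let h > 0 be such that (b−a)/h is a positive integer. Then every u ∈ S̃_{p,h}(a,b) satisfies the inverse inequality |u|_{H¹(a,b)} ≤ 2√3 · h^{−1} · ‖u‖_{L²(a,b)}. -/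
open MeasureTheory Set

/-- The reduced spline space `S̃_{p,h}(a,b)`: splines whose odd derivatives of order
`< p` vanish at both endpoints. -/
def IsReducedSplineOn (p n : ℕ) (h a b : ℝ) (u : ℝ → ℝ) : Prop :=
  IsSplineOn p n h a b u ∧
  ∀ l : ℕ, 2 * l + 1 < p →
    iteratedDerivWithin (2 * l + 1) u (Set.Icc a b) a = 0 ∧
    iteratedDerivWithin (2 * l + 1) u (Set.Icc a b) b = 0

/-!
On each element `u` is a polynomial `P j`; let `D k = ∑ⱼ ‖(P j)⁽ᵏ⁾‖²` be the broken `H^k`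
seminorms. Integrating `((P j)⁽ᵏ⁾)²` by parts on each element, the boundary terms telescope
because `u` is `C^{p-1}`, and the two outer ones vanish because one of `k - 1`, `k` is odd.
With `2xy ≤ c x² + c⁻¹ y²` this gives `2 D k ≤ c D (k - 1) + c⁻¹ D (k + 1)` for `0 < k < p`
and every `c > 0`. On the top level `(P j)⁽ᵖ⁻¹⁾` is affine, and an affine `ℓ` on an interval
of length `h` satisfies `h² ‖ℓ'‖² ≤ 12 ‖ℓ‖²`, so `D p ≤ c D (p - 1)` for `c = 12 / h²`.
Descending from `k = p` yields `D k ≤ c D (k - 1)` for every `k`, and `k = 1` is the claim.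
-/
open Polynomial

theorem Finset.sum_range_sub_of_eq_succ {G : Type*} [AddCommGroup G] (F : ℕ → ℕ → G) {n : ℕ}
    (hn : 0 < n) (hF : ∀ j, j + 1 < n → F j (j + 1) = F (j + 1) (j + 1)) :
    ∑ j ∈ Finset.range n, (F j (j + 1) - F j j) = F (n - 1) n - F 0 0 := by
  induction n with
  | zero => omega
  | succ n ih =>
    rcases Nat.eq_zero_or_pos n with rfl | hn
    · simp
    have hlast := hF (n - 1) (by omega)
    rw [Nat.sub_add_cancel hn] at hlast
    rw [Finset.sum_range_succ, ih hn fun j hj => hF j (by omega), hlast, Nat.add_sub_cancel]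
    abel

theorem mul_eq_zero_of_apply_odd_eq_zero {M : Type*} [MulZeroClass M] {f : ℕ → M} {p k : ℕ}
    (hf : ∀ l, 2 * l + 1 < p → f (2 * l + 1) = 0) (hk : k + 1 < p) : f (k + 1) * f k = 0 := by
  rcases Nat.even_or_odd' k with ⟨l, rfl | rfl⟩
  · rw [hf l hk, zero_mul]
  · rw [hf l (by omega), mul_zero]

theorem le_mul_of_two_mul_le_add {d : ℕ → ℝ} {c : ℝ} {q : ℕ} (hc : 0 < c)
    (hstep : ∀ k < q, 2 * d (k + 1) ≤ c * d k + c⁻¹ * d (k + 2))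
    (htop : d (q + 1) ≤ c * d q) : d 1 ≤ c * d 0 := by
  refine Nat.decreasingInduction (motive := fun k _ => d (k + 1) ≤ c * d k)
    (fun k hk hnext => ?_) htop (Nat.zero_le q)
  have : c⁻¹ * d (k + 2) ≤ d (k + 1) := by
    rw [inv_mul_le_iff₀ hc]; exact hnext
  linarith [hstep k hk]

theorem two_mul_intervalIntegral_mul_le {f g : ℝ → ℝ} {s t c : ℝ} (hst : s ≤ t) (hc : 0 < c)
    (hf : Continuous f) (hg : Continuous g) :
    2 * ∫ x in s..t, f x * g x ≤ c * (∫ x in s..t, f x ^ 2) + c⁻¹ * ∫ x in s..t, g x ^ 2 := by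
  have hfg : ∀ x, 2 * (f x * g x) ≤ c * f x ^ 2 + c⁻¹ * g x ^ 2 := fun x => by
    have := mul_nonneg (inv_nonneg.2 hc.le) (sq_nonneg (c * f x - g x))
    have hc' : c⁻¹ * c = 1 := inv_mul_cancel₀ hc.ne'
    nlinarith
  calc 2 * ∫ x in s..t, f x * g x = ∫ x in s..t, 2 * (f x * g x) :=
        (intervalIntegral.integral_const_mul _ _).symm
    _ ≤ ∫ x in s..t, (c * f x ^ 2 + c⁻¹ * g x ^ 2) :=
        intervalIntegral.integral_mono_on hst (Continuous.intervalIntegrable (by fun_prop) _ _)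
          (Continuous.intervalIntegrable (by fun_prop) _ _) fun x _ => hfg x
    _ = _ := by
        rw [intervalIntegral.integral_add (Continuous.intervalIntegrable (by fun_prop) _ _)
          (Continuous.intervalIntegrable (by fun_prop) _ _), intervalIntegral.integral_const_mul,
          intervalIntegral.integral_const_mul]

namespace Polynomial

theorem iteratedDeriv_eval (P : ℝ[X]) (k : ℕ) :
    iteratedDeriv k (fun x => P.eval x) = fun x => (derivative^[k] P).eval x := by
  induction k with
  | zero => simp
  | succ k ih =>
    ext x
    rw [iteratedDeriv_succ, ih, Polynomial.deriv, Function.iterate_succ_apply']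

theorem intervalIntegral_sq_eval_derivative (Q : ℝ[X]) (s t : ℝ) :
    ∫ x in s..t, (derivative Q).eval x ^ 2 =
      (derivative Q).eval t * Q.eval t - (derivative Q).eval s * Q.eval s -
        ∫ x in s..t, Q.eval x * (derivative (derivative Q)).eval x := by
  simp_rw [sq, mul_comm (Q.eval _)]
  exact intervalIntegral.integral_mul_deriv_eq_deriv_mul
    (fun x _ => (derivative Q).hasDerivAt x) (fun x _ => Q.hasDerivAt x)
    (Continuous.intervalIntegrable (by fun_prop) _ _)
    (Continuous.intervalIntegrable (by fun_prop) _ _)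

theorem sq_mul_intervalIntegral_sq_eval_derivative_le {Q : ℝ[X]} (hQ : Q.natDegree ≤ 1)
    {s t : ℝ} (hst : s ≤ t) :
    (t - s) ^ 2 * ∫ x in s..t, (derivative Q).eval x ^ 2 ≤ 12 * ∫ x in s..t, Q.eval x ^ 2 := by
  obtain ⟨c₁, c₀, rfl⟩ : ∃ c₁ c₀, Q = C c₁ * X + C c₀ :=
    ⟨_, _, eq_X_add_C_of_natDegree_le_one hQ⟩
  have hsq : ∀ x, (C c₁ * X + C c₀).eval x ^ 2 = c₁ ^ 2 * x ^ 2 + 2 * c₁ * c₀ * x + c₀ ^ 2 :=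
    fun x => by simp only [eval_add, eval_mul, eval_C, eval_X]; ring
  simp only [hsq, derivative_add, derivative_mul, derivative_C, derivative_X, zero_mul,
    mul_one, zero_add, add_zero, eval_C]
  rw [intervalIntegral.integral_add, intervalIntegral.integral_add,
    intervalIntegral.integral_const_mul, intervalIntegral.integral_const_mul, integral_pow,
    integral_id, intervalIntegral.integral_const, intervalIntegral.integral_const]
  · simp only [smul_eq_mul]
    -- the difference of the two sides is `3 (t - s) (c₁ (s + t) + 2 c₀)²`
    nlinarith [mul_nonneg (sub_nonneg.2 hst) (sq_nonneg (c₁ * (s + t) + 2 * c₀))]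
  all_goals exact Continuous.intervalIntegrable (by fun_prop) _ _

end Polynomial

section BrokenSeminorm

variable (t : ℕ → ℝ) (P : ℕ → ℝ[X]) (n : ℕ)

noncomputable def brokenSeminormSq (k : ℕ) : ℝ :=
  ∑ j ∈ Finset.range n, ∫ x in t j..t (j + 1), (derivative^[k] (P j)).eval x ^ 2

variable {t P n}

theorem brokenSeminormSq_succ_eq {m : ℕ} (hn : 0 < n)
    (hmatch : ∀ j, j + 1 < n → ∀ k ≤ m + 1,
      (derivative^[k] (P j)).eval (t (j + 1)) = (derivative^[k] (P (j + 1))).eval (t (j + 1)))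
    (hleft : (derivative^[m + 1] (P 0)).eval (t 0) * (derivative^[m] (P 0)).eval (t 0) = 0)
    (hright : (derivative^[m + 1] (P (n - 1))).eval (t n) *
      (derivative^[m] (P (n - 1))).eval (t n) = 0) :
    brokenSeminormSq t P n (m + 1) = -∑ j ∈ Finset.range n,
      ∫ x in t j..t (j + 1), (derivative^[m] (P j)).eval x * (derivative^[m + 2] (P j)).eval x := by
  set F : ℕ → ℕ → ℝ := fun j i =>
    (derivative^[m + 1] (P j)).eval (t i) * (derivative^[m] (P j)).eval (t i)
  have htelescope : ∑ j ∈ Finset.range n, (F j (j + 1) - F j j) = 0 := by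
    rw [Finset.sum_range_sub_of_eq_succ F hn fun j hj => by
      simp only [F, hmatch j hj m (by omega), hmatch j hj (m + 1) le_rfl]]
    simp only [F]
    rw [hleft, hright, sub_zero]
  rw [brokenSeminormSq, ← add_zero (-_), ← htelescope, ← Finset.sum_neg_distrib,
    ← Finset.sum_add_distrib]
  refine Finset.sum_congr rfl fun j _ => ?_
  simp only [F, Function.iterate_succ_apply', intervalIntegral_sq_eval_derivative]
  ring

theorem two_mul_brokenSeminormSq_succ_le {m : ℕ} {c : ℝ} (hc : 0 < c) (ht : Monotone t)
    (hn : 0 < n)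
    (hmatch : ∀ j, j + 1 < n → ∀ k ≤ m + 1,
      (derivative^[k] (P j)).eval (t (j + 1)) = (derivative^[k] (P (j + 1))).eval (t (j + 1)))
    (hleft : (derivative^[m + 1] (P 0)).eval (t 0) * (derivative^[m] (P 0)).eval (t 0) = 0)
    (hright : (derivative^[m + 1] (P (n - 1))).eval (t n) *
      (derivative^[m] (P (n - 1))).eval (t n) = 0) :
    2 * brokenSeminormSq t P n (m + 1) ≤
      c * brokenSeminormSq t P n m + c⁻¹ * brokenSeminormSq t P n (m + 2) := by
  rw [brokenSeminormSq_succ_eq hn hmatch hleft hright, brokenSeminormSq, brokenSeminormSq,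
    mul_neg]
  simp only [Finset.mul_sum]
  rw [← Finset.sum_neg_distrib, ← Finset.sum_add_distrib]
  refine Finset.sum_le_sum fun j _ => ?_
  have h := two_mul_intervalIntegral_mul_le (ht (Nat.le_succ j)) hc
    (f := fun x => (derivative^[m] (P j)).eval x)
    (g := fun x => -(derivative^[m + 2] (P j)).eval x) (by fun_prop) (by fun_prop)
  simpa only [mul_neg, intervalIntegral.integral_neg, neg_sq] using h

theorem brokenSeminormSq_succ_le_of_natDegree_le_one {m : ℕ} {h : ℝ} (hh : 0 < h)
    (hmesh : ∀ j < n, h ≤ t (j + 1) - t j)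
    (hdeg : ∀ j < n, (derivative^[m] (P j)).natDegree ≤ 1) :
    brokenSeminormSq t P n (m + 1) ≤ 12 / h ^ 2 * brokenSeminormSq t P n m := by
  rw [brokenSeminormSq, brokenSeminormSq, Finset.mul_sum]
  refine Finset.sum_le_sum fun j hj => ?_
  have hj := Finset.mem_range.mp hj
  have hlen := hmesh j hj
  rw [div_mul_eq_mul_div, le_div_iff₀ (by positivity), mul_comm, Function.iterate_succ_apply']
  calc h ^ 2 * ∫ x in t j..t (j + 1), (derivative (derivative^[m] (P j))).eval x ^ 2
      ≤ (t (j + 1) - t j) ^ 2 *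
          ∫ x in t j..t (j + 1), (derivative (derivative^[m] (P j))).eval x ^ 2 := by
        gcongr
        exact intervalIntegral.integral_nonneg (by linarith) fun x _ => sq_nonneg _
    _ ≤ 12 * ∫ x in t j..t (j + 1), (derivative^[m] (P j)).eval x ^ 2 :=
        sq_mul_intervalIntegral_sq_eval_derivative_le (hdeg j hj) (by linarith)

end BrokenSeminorm

/-- The pieces `P j` on `[t j, t (j + 1)]` of a function in the reduced spline space. -/
structure IsReducedPiecewisePoly (p n : ℕ) (t : ℕ → ℝ) (P : ℕ → ℝ[X]) : Prop where
  natDegree_le : ∀ j < n, (P j).natDegree ≤ p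
  eval_iterate_derivative_eq : ∀ j, j + 1 < n → ∀ k ≤ p - 1,
    (derivative^[k] (P j)).eval (t (j + 1)) = (derivative^[k] (P (j + 1))).eval (t (j + 1))
  eval_iterate_derivative_left : ∀ l, 2 * l + 1 < p →
    (derivative^[2 * l + 1] (P 0)).eval (t 0) = 0
  eval_iterate_derivative_right : ∀ l, 2 * l + 1 < p →
    (derivative^[2 * l + 1] (P (n - 1))).eval (t n) = 0

theorem IsReducedPiecewisePoly.brokenSeminormSq_one_le {p n : ℕ} {t : ℕ → ℝ} {P : ℕ → ℝ[X]}
    (hP : IsReducedPiecewisePoly p n t P) (hp : 1 ≤ p) (hn : 0 < n) (ht : Monotone t) {h : ℝ}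
    (hh : 0 < h) (hmesh : ∀ j < n, h ≤ t (j + 1) - t j) :
    brokenSeminormSq t P n 1 ≤ 12 / h ^ 2 * brokenSeminormSq t P n 0 := by
  obtain ⟨q, rfl⟩ : ∃ q, p = q + 1 := ⟨p - 1, by omega⟩
  refine le_mul_of_two_mul_le_add (q := q) (by positivity) (fun k hk => ?_) ?_
  · refine two_mul_brokenSeminormSq_succ_le (by positivity) ht hn
      (fun j hj i hi => hP.eval_iterate_derivative_eq j hj i (by omega)) ?_ ?_
    · exact mul_eq_zero_of_apply_odd_eq_zero (f := fun i => (derivative^[i] (P 0)).eval (t 0))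
        hP.eval_iterate_derivative_left (by omega)
    · exact mul_eq_zero_of_apply_odd_eq_zero
        (f := fun i => (derivative^[i] (P (n - 1))).eval (t n))
        hP.eval_iterate_derivative_right (by omega)
  · refine brokenSeminormSq_succ_le_of_natDegree_le_one hh hmesh fun j hj => ?_
    have := hP.natDegree_le j hj
    exact (natDegree_iterate_derivative _ _).trans (by omega)

theorem iteratedDerivWithin_Icc_eqOn_eval_iterate_derivative {u : ℝ → ℝ} {P : ℝ[X]}
    {a b s t : ℝ} {N k : ℕ} (hu : ContDiffOn ℝ N u (Icc a b)) (hk : k ≤ N) (hst : s < t)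
    (hsub : Icc s t ⊆ Icc a b) (hP : EqOn u (fun x => P.eval x) (Icc s t)) :
    EqOn (iteratedDerivWithin k u (Icc a b)) (fun x => (derivative^[k] P).eval x) (Icc s t) := by
  intro y hy
  have hab : a < b :=
    (hsub ⟨le_rfl, hst.le⟩).1.trans_lt (hst.trans_le (hsub ⟨hst.le, le_rfl⟩).2)
  rw [iteratedDerivWithin_eq_iteratedFDerivWithin, ← iteratedFDerivWithin_subset hsub
    (uniqueDiffOn_Icc hst) (uniqueDiffOn_Icc hab) (hu.of_le (by exact_mod_cast hk)) hy,
    ← iteratedDerivWithin_eq_iteratedFDerivWithin, iteratedDerivWithin_congr hP hy,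
    iteratedDerivWithin_eq_iteratedDeriv (uniqueDiffOn_Icc hst)
      (by simpa using (P.contDiff_aeval (𝕜 := ℝ) k).contDiffAt) hy,
    iteratedDeriv_eval]

theorem setIntegral_Ioo_sq_eq_sum_intervalIntegral {t : ℕ → ℝ} (ht : Monotone t) {n : ℕ}
    {v : ℝ → ℝ} {Q : ℕ → ℝ[X]}
    (hv : ∀ j < n, EqOn v (fun x => (Q j).eval x) (Ioo (t j) (t (j + 1)))) :
    ∫ x in Ioo (t 0) (t n), v x ^ 2 =
      ∑ j ∈ Finset.range n, ∫ x in t j..t (j + 1), (Q j).eval x ^ 2 := by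
  have hpiece : ∀ j < n, EqOn (fun x => (Q j).eval x ^ 2) (fun x => v x ^ 2)
      (uIoo (t j) (t (j + 1))) := fun j hj x hx => by
    rw [uIoo_of_le (ht j.le_succ)] at hx
    simp only [hv j hj hx]
  rw [Finset.sum_congr rfl fun j hj =>
      intervalIntegral.integral_congr_uIoo (hpiece j (Finset.mem_range.mp hj)),
    intervalIntegral.sum_integral_adjacent_intervals fun j hj =>
      (Continuous.intervalIntegrable (by fun_prop) _ _).congr_uIoo (hpiece j hj),
    intervalIntegral.integral_of_le (ht n.zero_le), integral_Ioc_eq_integral_Ioo]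

theorem IsReducedSplineOn.exists_isReducedPiecewisePoly {p n : ℕ} {h a b : ℝ} {u : ℝ → ℝ}
    (hu : IsReducedSplineOn p n h a b u) (hh : 0 < h) (hn : 0 < n) (hgrid : b - a = n * h) :
    ∃ P : ℕ → ℝ[X], IsReducedPiecewisePoly p n (fun j => a + j * h) P ∧
      ∀ j < n, EqOn u (fun x => (P j).eval x) (Icc (a + j * h) (a + (j + 1 : ℕ) * h)) := by
  obtain ⟨⟨hsmooth, hpoly⟩, hbc⟩ := hu
  choose! P hdeg hP using hpoly
  have hcast : ∀ j : ℕ, a + ((j + 1 : ℕ) : ℝ) * h = a + ((j : ℝ) + 1) * h := fun j => by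
    push_cast; ring
  have hsub : ∀ j < n, Icc (a + j * h) (a + ((j + 1 : ℕ) : ℝ) * h) ⊆ Icc a b := fun j hj => by
    have : ((j + 1 : ℕ) : ℝ) ≤ n := by exact_mod_cast hj
    exact Icc_subset_Icc (le_add_of_nonneg_right (by positivity)) (by nlinarith)
  have hpiece :
      ∀ j < n, EqOn u (fun x => (P j).eval x) (Icc (a + j * h) (a + (j + 1 : ℕ) * h)) :=
    fun j hj x hx => hP j hj x (by rwa [← hcast])
  have hderiv : ∀ j < n, ∀ k ≤ p - 1, EqOn (iteratedDerivWithin k u (Icc a b))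
      (fun x => (derivative^[k] (P j)).eval x) (Icc (a + j * h) (a + (j + 1 : ℕ) * h)) :=
    fun j hj k hk => iteratedDerivWithin_Icc_eqOn_eval_iterate_derivative hsmooth hk
      (by gcongr; simp) (hsub j hj) (hpiece j hj)
  refine ⟨P, ⟨hdeg, fun j hj k hk => ?_, fun l hl => ?_, fun l hl => ?_⟩, hpiece⟩
  · have hknot : a + ((j + 1 : ℕ) : ℝ) * h ∈
        Icc (a + ((j + 1 : ℕ) : ℝ) * h) (a + (j + 1 + 1 : ℕ) * h) :=
      ⟨le_rfl, by gcongr; simp⟩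
    exact (hderiv j (by omega) k hk (right_mem_Icc.2 (by gcongr; simp))).symm.trans
      (hderiv (j + 1) hj k hk hknot)
  · have ha : a ∈ Icc (a + ((0 : ℕ) : ℝ) * h) (a + ((0 + 1 : ℕ) : ℝ) * h) := by
      constructor <;> simp [hh.le]
    simpa using (hderiv 0 hn (2 * l + 1) (by omega) ha).symm.trans (hbc l hl).1
  · have hb : a + (n : ℝ) * h = b := by linarith
    have hknot : a + ((n - 1 + 1 : ℕ) : ℝ) * h ∈
        Icc (a + ((n - 1 : ℕ) : ℝ) * h) (a + ((n - 1 + 1 : ℕ) : ℝ) * h) :=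
      right_mem_Icc.2 (by gcongr; simp)
    have := hderiv (n - 1) (by omega) (2 * l + 1) (by omega) hknot
    rw [Nat.sub_add_cancel hn, hb, (hbc l hl).2] at this
    rw [hb]
    exact this.symm

theorem reduced_spline_inverse_inequality_general (a b h : ℝ) (p n : ℕ)
    (hp : 1 ≤ p) (hh : 0 < h) (hn : 0 < n) (hgrid : b - a = n * h)
    (u : ℝ → ℝ) (hu : IsReducedSplineOn p n h a b u) :
    L2 a b (deriv u) ≤ 2 * Real.sqrt 3 * h⁻¹ * L2 a b u := by
  obtain ⟨P, hP, hu_eq⟩ := hu.exists_isReducedPiecewisePoly hh hn hgrid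
  set t : ℕ → ℝ := fun j => a + j * h
  have ht : Monotone t := fun i j hij => by simp only [t]; gcongr
  have hmesh : ∀ j < n, h ≤ t (j + 1) - t j := fun j _ => by simp only [t]; push_cast; linarith
  have hderiv :
      ∀ j < n, EqOn (deriv u) (fun x => (derivative (P j)).eval x) (Ioo (t j) (t (j + 1))) :=
    fun j hj x hx => by
      rw [((hu_eq j hj).mono Ioo_subset_Icc_self).deriv isOpen_Ioo hx, Polynomial.deriv]
  have hconst : 12 / h ^ 2 = (2 * Real.sqrt 3 * h⁻¹) ^ 2 := by
    rw [mul_pow, mul_pow, Real.sq_sqrt (by norm_num), inv_pow]; ring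
  have hE := hP.brokenSeminormSq_one_le hp hn ht hh hmesh
  rw [hconst] at hE
  have ha : t 0 = a := by simp [t]
  have hb : t n = b := by simp only [t]; linarith
  rw [L2, L2, ← ha, ← hb, setIntegral_Ioo_sq_eq_sum_intervalIntegral ht hderiv,
    setIntegral_Ioo_sq_eq_sum_intervalIntegral ht fun j hj =>
      (hu_eq j hj).mono Ioo_subset_Icc_self,
    ← Real.sqrt_sq (by positivity : 0 ≤ 2 * Real.sqrt 3 * h⁻¹), ← Real.sqrt_mul (sq_nonneg _)]
  exact Real.sqrt_le_sqrt hE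

/-- Theorem 4 of the paper: robust inverse inequality for the
reduced spline space. -/
theorem reduced_spline_inverse_inequality (a b h : ℝ) (p n : ℕ)
    (hab : a < b) (hp : 1 ≤ p) (hh : 0 < h) (hn : 0 < n) (hgrid : b - a = n * h)
    (u : ℝ → ℝ) (hu : IsReducedSplineOn p n h a b u) :
    L2 a b (deriv u) ≤ 2 * Real.sqrt 3 * h⁻¹ * L2 a b u :=
  reduced_spline_inverse_inequality_general a b h p n hp hh hn hgrid u hu
end

section
/- Let p ≥ 1 be an integer and let h > 0 be such that 1/h is a positive integer. Define u : [0,1] → ℝ by u(x) = (1 − x/h)^p for x ∈ [0,h) and u(x) = 0 for x ∈ [h,1]. Then u ∈ S_{p,h}(0,1), u is not identically zero, and ∫_0^1 u′(x)² dx = ( (2p+1) · p² / ( (2p−1) · h² ) ) · ∫_0^1 u(x)² dx; equivalently |u|_{H¹(0,1)} / ‖u‖_{L²(0,1)} = √((2p+1)/(2p−1)) · p · h^{−1}. (Hence no inverse inequality with a constant independent of p can hold on all of S_{p,h}(0,1).) -/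
/-!
The function is the truncated power `(1 - x/h)₊^p`. Off the kink at `h` its derivative is
`-(p/h) (1 - x/h)₊^(p-1)`; at the kink both one-sided pieces vanish to order `p`, which gives the
`C^(p-1)` regularity. Hence `u'^2 = (p/h)^2 (1 - x/h)₊^(2p-2)` almost everywhere and
`u^2 = (1 - x/h)₊^(2p)`, and `∫₀¹ (1 - x/h)₊^m = h/(m+1)` gives the ratio `(p/h)^2 (2p+1)/(2p-1)`.
-/

open MeasureTheory Set

lemma hasDerivAt_one_sub_div_pow (h : ℝ) (k : ℕ) (x : ℝ) :
    HasDerivAt (fun y : ℝ => (1 - y / h) ^ k) (-(k / h) * (1 - x / h) ^ (k - 1)) x := by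
  refine ((((hasDerivAt_id' x).div_const h).const_sub 1).fun_pow k).congr_deriv ?_
  ring

noncomputable def truncPow (h : ℝ) (k : ℕ) (x : ℝ) : ℝ := if x < h then (1 - x / h) ^ k else 0

namespace truncPow

variable {h : ℝ} {k : ℕ}

lemma eqOn_Iic (hh : h ≠ 0) (hk : k ≠ 0) :
    EqOn (truncPow h k) (fun x => (1 - x / h) ^ k) (Iic h) := by
  intro x hx
  rcases (mem_Iic.mp hx).lt_or_eq with hlt | rfl
  · simp [truncPow, hlt]
  · simp [truncPow, hh, hk]

lemma eqOn_Ici (k : ℕ) : EqOn (truncPow h k) 0 (Ici h) := by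
  intro x hx
  simp [truncPow, not_lt.mpr (mem_Ici.mp hx)]

lemma apply_pow {m : ℕ} (hm : m ≠ 0) (x : ℝ) : truncPow h k x ^ m = truncPow h (k * m) x := by
  by_cases hx : x < h <;> simp [truncPow, hx, pow_mul, hm]

lemma hasDerivAt_of_ne {x : ℝ} (hx : x ≠ h) (k : ℕ) :
    HasDerivAt (truncPow h k) (-(k / h) * truncPow h (k - 1) x) x := by
  rcases hx.lt_or_gt with hlt | hgt
  · have hev : (fun y : ℝ => (1 - y / h) ^ k) =ᶠ[nhds x] truncPow h k := by
      filter_upwards [Iio_mem_nhds hlt] with y hy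
      simp [truncPow, mem_Iio.mp hy]
    simpa [truncPow, hlt] using (hasDerivAt_one_sub_div_pow h k x).congr_of_eventuallyEq hev.symm
  · have hev : (fun _ : ℝ => (0 : ℝ)) =ᶠ[nhds x] truncPow h k := by
      filter_upwards [Ioi_mem_nhds hgt] with y hy
      exact (eqOn_Ici k (mem_Ici.mpr (mem_Ioi.mp hy).le)).symm
    simpa [truncPow, not_lt.mpr hgt.le] using (hasDerivAt_const x 0).congr_of_eventuallyEq hev.symm

lemma continuous (hh : h ≠ 0) (hk : k ≠ 0) : Continuous (truncPow h k) := by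
  rw [← continuousOn_univ, ← Iic_union_Ici (a := h),
    continuousOn_union_iff_of_isClosed isClosed_Iic isClosed_Ici]
  exact ⟨(by fun_prop : Continuous fun x : ℝ => (1 - x / h) ^ k).continuousOn.congr
    (eqOn_Iic hh hk), continuousOn_const.congr (eqOn_Ici k)⟩

lemma hasDerivAt_self (hh : h ≠ 0) (hk : 2 ≤ k) : HasDerivAt (truncPow h k) 0 h := by
  have hleft : HasDerivWithinAt (truncPow h k) 0 (Iic h) h := by
    have := (hasDerivAt_one_sub_div_pow h k h).hasDerivWithinAt (s := Iic h)
    refine (this.congr (eqOn_Iic hh (by omega)) (eqOn_Iic hh (by omega) self_mem_Iic)).congr_deriv ?_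
    simp [hh, show k - 1 ≠ 0 by omega]
  have hright : HasDerivWithinAt (truncPow h k) 0 (Ici h) h :=
    (hasDerivWithinAt_const h _ 0).congr (eqOn_Ici k) (eqOn_Ici k self_mem_Ici)
  simpa using hleft.union hright

lemma hasDerivAt (hh : h ≠ 0) (hk : 2 ≤ k) (x : ℝ) :
    HasDerivAt (truncPow h k) (-(k / h) * truncPow h (k - 1) x) x := by
  rcases eq_or_ne x h with rfl | hx
  · simpa [eqOn_Ici (h := x) (k - 1) self_mem_Ici] using hasDerivAt_self hh hk
  · exact hasDerivAt_of_ne hx k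

lemma contDiff (hh : h ≠ 0) {m : ℕ} (hmk : m < k) : ContDiff ℝ m (truncPow h k) := by
  induction m generalizing k with
  | zero => exact contDiff_zero.mpr (continuous hh (by omega))
  | succ m ih =>
    have hderiv : deriv (truncPow h k) = fun x => -(k / h) * truncPow h (k - 1) x :=
      funext fun x => (hasDerivAt hh (by omega) x).deriv
    rw [Nat.cast_succ, contDiff_succ_iff_deriv]
    refine ⟨fun x => (hasDerivAt hh (by omega) x).differentiableAt, by simp, ?_⟩
    rw [hderiv]
    exact contDiff_const.mul (ih (by omega))

lemma setIntegral_Ioo {b : ℝ} (hh : 0 < h) (hhb : h ≤ b) (k : ℕ) :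
    ∫ x in Ioo 0 b, truncPow h k x = h / (k + 1) := by
  have hind : truncPow h k = (Iio h).indicator fun x => (1 - x / h) ^ k := by
    funext x
    simp [truncPow, indicator_apply]
  rw [hind, setIntegral_indicator measurableSet_Iio, Ioo_inter_Iio, min_eq_right hhb,
    ← integral_Ioc_eq_integral_Ioo, ← intervalIntegral.integral_of_le hh.le,
    intervalIntegral.integral_comp_div (fun x => (1 - x) ^ k) hh.ne', zero_div, div_self hh.ne',
    intervalIntegral.integral_comp_sub_left (fun x => x ^ k)]
  simp [div_eq_mul_inv]

lemma setIntegral_Ioo_deriv_sq {b : ℝ} (hh : 0 < h) (hhb : h ≤ b) (hk : k ≠ 0) :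
    ∫ x in Ioo 0 b, deriv (truncPow h k) x ^ 2 = (k / h) ^ 2 * (h / (2 * k - 1)) := by
  -- `{h}` is null, so the junk value of `deriv` at the kink (for `k = 1`) is irrelevant.
  have hae : ∀ᵐ x, x ∈ Ioo 0 b →
      deriv (truncPow h k) x ^ 2 = (k / h) ^ 2 * truncPow h ((k - 1) * 2) x := by
    filter_upwards [volume.ae_ne h] with x hx _
    rw [(hasDerivAt_of_ne hx k).deriv, mul_pow, neg_sq, apply_pow two_ne_zero]
  rw [setIntegral_congr_ae measurableSet_Ioo hae, integral_const_mul, setIntegral_Ioo hh hhb]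
  push_cast [Nat.one_le_iff_ne_zero.mpr hk]
  ring

open Polynomial in
lemma isSplineOn (hh : 0 < h) (hk : k ≠ 0) (n : ℕ) (b : ℝ) : IsSplineOn k n h 0 b (truncPow h k) := by
  refine ⟨(contDiff hh.ne' (by omega)).contDiffOn, fun j _ => ?_⟩
  rcases Nat.eq_zero_or_pos j with rfl | hj
  · refine ⟨(1 - C h⁻¹ * X) ^ k, by compute_degree, fun x hx => ?_⟩
    simpa [div_eq_inv_mul] using eqOn_Iic hh.ne' hk (by simpa using hx.2)
  · refine ⟨0, by simp, fun x hx => ?_⟩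
    have hj1 : (1 : ℝ) ≤ j := by exact_mod_cast hj
    simp only [zero_add, mem_Icc] at hx
    simpa using eqOn_Ici k ((le_mul_of_one_le_left hh.le hj1).trans hx.1)

end truncPow

/-- Remark 2 of the paper: the counterexample showing that no
`p`-robust inverse inequality can hold on all of `S_{p,h}(0,1)`. -/
theorem counterexample_inverse_inequality (p n : ℕ) (h : ℝ)
    (hp : 1 ≤ p) (hh : 0 < h) (hn : 0 < n) (hgrid : (1 : ℝ) = n * h) :
    IsSplineOn p n h 0 1 (fun x => if x < h then (1 - x / h) ^ p else 0) ∧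
    (∃ x ∈ Set.Icc (0 : ℝ) 1, (if x < h then (1 - x / h) ^ p else (0 : ℝ)) ≠ 0) ∧
    (∫ x in Set.Ioo (0 : ℝ) 1,
        deriv (fun y => if y < h then (1 - y / h) ^ p else 0) x ^ 2) =
      ((2 * (p : ℝ) + 1) * (p : ℝ) ^ 2 / ((2 * (p : ℝ) - 1) * h ^ 2)) *
        ∫ x in Set.Ioo (0 : ℝ) 1, (if x < h then (1 - x / h) ^ p else (0 : ℝ)) ^ 2 := by
  change IsSplineOn p n h 0 1 (truncPow h p) ∧ (∃ x ∈ Icc (0 : ℝ) 1, truncPow h p x ≠ 0) ∧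
    ∫ x in Ioo (0 : ℝ) 1, deriv (truncPow h p) x ^ 2 =
      _ * ∫ x in Ioo (0 : ℝ) 1, truncPow h p x ^ 2
  have hh1 : h ≤ 1 := hgrid ▸ le_mul_of_one_le_left hh.le (by exact_mod_cast hn)
  have hp0 : p ≠ 0 := by omega
  refine ⟨truncPow.isSplineOn hh hp0 n 1, ⟨0, by simp, by simp [truncPow, hh]⟩, ?_⟩
  simp_rw [truncPow.apply_pow two_ne_zero]
  rw [truncPow.setIntegral_Ioo_deriv_sq hh hh1 hp0, truncPow.setIntegral_Ioo hh hh1]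
  have h2p : (2 * p - 1 : ℝ) ≠ 0 := by
    have : (1 : ℝ) ≤ p := by exact_mod_cast hp
    linarith
  push_cast
  field_simp
end

section
/- Let a < b be real numbers, let p ≥ 1 be an integer, and let h > 0 be such that (b−a)/(2h) is a positive integer and 2·h·p < b−a. Then there exists a non-constant spline u_{p,h} ∈ S̃_{p,h}(a,b) such that |u_{p,h}|_{H¹(a,b)} ≥ (1/(2√2)) · h^{−1} · ‖u_{p,h}‖_{L²(a,b)}; i.e., the inverse inequality on S̃_{p,h}(a,b) is sharp up to a constant. -/
/-!
The extremal functions are Euler splines. Passing from a `2h`-antiperiodic function to its unique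
`2h`-antiperiodic primitive turns evenness about `c` into oddness about `c`, hence into evenness
about `c + h`. Iterating `p` times from a square wave whose jumps lie on the grid therefore gives
a `C^{p-1}` spline `u` of degree `p` whose odd derivatives of order `< p` vanish at `a` and at
`b = a + 2nh`, and which vanishes at the midpoints `a + (2k+1)h` of the cells of length `2h`.
On such a cell `u x ^ 2 = (∫ t in z..x, u' t) ^ 2` is at most `h` times the cell integral of
`u' ^ 2`, whence `‖u‖² ≤ 2h²‖u'‖²`.
-/

open MeasureTheory Set

open Function intervalIntegral Polynomial

theorem MeasureTheory.LocallyIntegrable.intervalIntegrable {E : Type*} [NormedAddCommGroup E]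
    {μ : Measure ℝ} {f : ℝ → E} (hf : LocallyIntegrable f μ) (a b : ℝ) :
    IntervalIntegrable f μ a b :=
  intervalIntegrable_iff.mpr <|
    (hf.integrableOn_isCompact isCompact_uIcc).mono_set uIoc_subset_uIcc

-- For `T`-antiperiodic `g`, the unique `T`-antiperiodic primitive of `g`.
noncomputable def antiperiodicPrimitive (T : ℝ) (g : ℝ → ℝ) (x : ℝ) : ℝ :=
  -(∫ t in x..x + T, g t) / 2

section AntiperiodicPrimitive

variable {T : ℝ} {g : ℝ → ℝ}

theorem Function.Antiperiodic.intervalIntegral_add_add (hT : Antiperiodic g T) (x y : ℝ) :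
    ∫ t in x + T..y + T, g t = -∫ t in x..y, g t := by
  rw [← integral_comp_add_right, ← intervalIntegral.integral_neg]
  exact integral_congr fun t _ => hT t

theorem Function.Antiperiodic.antiperiodicPrimitive (hT : Antiperiodic g T) :
    Antiperiodic (antiperiodicPrimitive T g) T := by
  intro x
  simp only [_root_.antiperiodicPrimitive, hT.intervalIntegral_add_add]
  ring

theorem antiperiodicPrimitive_sub (hg : LocallyIntegrable g) (hT : Antiperiodic g T) (x y : ℝ) :
    antiperiodicPrimitive T g y - antiperiodicPrimitive T g x = ∫ t in x..y, g t := by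
  have hcomm := integral_interval_sub_interval_comm (hg.intervalIntegrable y (y + T))
    (hg.intervalIntegrable x (x + T)) (hg.intervalIntegrable y x)
  rw [hT.intervalIntegral_add_add, integral_symm x y] at hcomm
  simp only [antiperiodicPrimitive]
  linarith

theorem antiperiodicPrimitive_eq_add_integral (hg : LocallyIntegrable g)
    (hT : Antiperiodic g T) :
    antiperiodicPrimitive T g = fun y => antiperiodicPrimitive T g 0 + ∫ t in 0..y, g t := by
  ext y
  rw [← antiperiodicPrimitive_sub hg hT, add_sub_cancel]

theorem continuous_antiperiodicPrimitive (hg : LocallyIntegrable g) (hT : Antiperiodic g T) :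
    Continuous (antiperiodicPrimitive T g) := by
  rw [antiperiodicPrimitive_eq_add_integral hg hT]
  exact continuous_const.add (continuous_primitive hg.intervalIntegrable 0)

theorem ae_hasDerivAt_antiperiodicPrimitive (hg : LocallyIntegrable g) (hT : Antiperiodic g T) :
    ∀ᵐ x, HasDerivAt (antiperiodicPrimitive T g) (g x) x := by
  rw [antiperiodicPrimitive_eq_add_integral hg hT]
  filter_upwards [LocallyIntegrable.ae_hasDerivAt_integral hg] with x hx
  exact (hx 0).const_add _

theorem hasDerivAt_antiperiodicPrimitive (hg : Continuous g) (hT : Antiperiodic g T) (x : ℝ) :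
    HasDerivAt (antiperiodicPrimitive T g) (g x) x := by
  rw [antiperiodicPrimitive_eq_add_integral hg.locallyIntegrable hT]
  exact (hg.integral_hasStrictDerivAt 0 x).hasDerivAt.const_add _

theorem antiperiodicPrimitive_two_mul_sub (hT : Antiperiodic g T)
    {c : ℝ} (hc : ∀ᵐ x, g (2 * c - x) = g x) (x : ℝ) :
    antiperiodicPrimitive T g (2 * c - x) = -antiperiodicPrimitive T g x := by
  have hflip : ∫ t in x - T..x, g (2 * c - t) = ∫ t in x - T..x, g t :=
    integral_congr_ae (hc.mono fun t ht _ => ht)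
  have hshift := hT.intervalIntegral_add_add (x - T) x
  rw [integral_comp_sub_left, show 2 * c - (x - T) = 2 * c - x + T by ring] at hflip
  rw [sub_add_cancel] at hshift
  simp only [antiperiodicPrimitive]
  rw [hflip, hshift]
  ring

end AntiperiodicPrimitive

namespace Polynomial

variable {K : Type*} [Field K]

noncomputable def antiderivative (P : K[X]) : K[X] :=
  P.sum fun n c => C (c / (n + 1)) * X ^ (n + 1)

theorem derivative_antiderivative [CharZero K] (P : K[X]) : derivative (antiderivative P) = P := by
  conv_rhs => rw [← P.sum_C_mul_X_pow_eq]
  simp only [antiderivative, Polynomial.sum, map_sum, derivative_C_mul_X_pow, Nat.add_sub_cancel]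
  refine Finset.sum_congr rfl fun n _ => ?_
  rw [Nat.cast_add_one, div_mul_cancel₀ _ n.cast_add_one_ne_zero]

theorem natDegree_antiderivative_le (P : K[X]) :
    (antiderivative P).natDegree ≤ P.natDegree + 1 :=
  natDegree_sum_le_of_forall_le _ _ fun n hn =>
    (natDegree_C_mul_X_pow_le _ _).trans (Nat.succ_le_succ (le_natDegree_of_mem_supp n hn))

end Polynomial

theorem exists_natDegree_le_eval_eq_of_sub_eq_integral {F g : ℝ → ℝ} {L R : ℝ} {Q : ℝ[X]}
    (hF : ∀ x ∈ Icc L R, F x - F L = ∫ t in L..x, g t) (hQ : ∀ x ∈ Ioo L R, g x = Q.eval x) :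
    ∃ Q' : ℝ[X], Q'.natDegree ≤ Q.natDegree + 1 ∧ ∀ x ∈ Icc L R, F x = Q'.eval x := by
  set A := Q.antiderivative
  refine ⟨A + C (F L - A.eval L), ?_, fun x hx => ?_⟩
  · refine (natDegree_add_le _ _).trans (max_le (natDegree_antiderivative_le Q) ?_)
    rw [natDegree_C]
    exact Nat.zero_le _
  · have hgQ : ∫ t in L..x, g t = ∫ t in L..x, Q.eval t := by
      refine integral_congr_ae ((Measure.ae_ne volume x).mono fun t htx ht => hQ t ?_)
      rw [uIoc_of_le hx.1] at ht
      exact ⟨ht.1, (lt_of_le_of_ne ht.2 htx).trans_le hx.2⟩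
    have hA : ∫ t in L..x, Q.eval t = A.eval x - A.eval L := by
      refine integral_eq_sub_of_hasDerivAt (f := fun t => A.eval t) (fun t _ => ?_)
        (Q.continuous.intervalIntegrable L x)
      simpa only [A, derivative_antiderivative] using A.hasDerivAt t
    rw [eval_add, eval_C]
    linarith [hF x hx]

theorem sq_intervalIntegral_le {g : ℝ → ℝ} {x y : ℝ} (hxy : x ≤ y)
    (hg : IntervalIntegrable g volume x y)
    (hg2 : IntervalIntegrable (fun t => g t ^ 2) volume x y) :
    (∫ t in x..y, g t) ^ 2 ≤ (y - x) * ∫ t in x..y, g t ^ 2 := by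
  rcases hxy.eq_or_lt with rfl | hlt
  · simp
  have hpos : 0 < y - x := sub_pos.mpr hlt
  have : NeZero (volume.restrict (uIoc x y)) := ⟨by simp [uIoc_of_le hxy, hlt]⟩
  have : IsFiniteMeasure (volume.restrict (uIoc x y)) := ⟨by simp [uIoc_of_le hxy]⟩
  have hjensen := (even_two.convexOn_pow (𝕜 := ℝ)).map_average_le
    (μ := volume.restrict (uIoc x y)) (continuous_pow 2).continuousOn isClosed_univ (by simp)
    hg.def' hg2.def'
  rw [interval_average_eq_div, interval_average_eq_div, div_pow,
    div_le_div_iff₀ (by positivity) hpos] at hjensen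
  nlinarith

section Poincare

variable {F g : ℝ → ℝ}

theorem continuous_of_sub_eq_integral (hF : ∀ x y, F y - F x = ∫ t in x..y, g t)
    (hg : LocallyIntegrable g) : Continuous F := by
  have hF0 : F = fun y => F 0 + ∫ t in 0..y, g t := funext fun y => by linarith [hF 0 y]
  rw [hF0]
  exact continuous_const.add (continuous_primitive hg.intervalIntegrable 0)

theorem integral_sq_le_of_eq_zero (hF : ∀ x y, F y - F x = ∫ t in x..y, g t)
    (hg : LocallyIntegrable g) (hg2 : LocallyIntegrable fun t => g t ^ 2)
    {z r : ℝ} (hr : 0 ≤ r) (hz : F z = 0) :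
    ∫ x in z - r..z + r, F x ^ 2 ≤ 2 * r ^ 2 * ∫ x in z - r..z + r, g x ^ 2 := by
  set B := ∫ x in z - r..z + r, g x ^ 2
  have hpiece : ∀ u v, z - r ≤ u → u ≤ v → v ≤ z + r → |v - u| ≤ r →
      (∫ t in u..v, g t) ^ 2 ≤ r * B := fun u v hu huv hv hvu =>
    calc (∫ t in u..v, g t) ^ 2 ≤ (v - u) * ∫ t in u..v, g t ^ 2 :=
          sq_intervalIntegral_le huv (hg.intervalIntegrable u v) (hg2.intervalIntegrable u v)
      _ ≤ r * B := mul_le_mul ((le_abs_self _).trans hvu)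
          (integral_mono_interval hu huv hv (.of_forall fun t => sq_nonneg (g t))
            (hg2.intervalIntegrable _ _))
          (integral_nonneg huv fun t _ => sq_nonneg (g t)) hr
  have hpt : ∀ x ∈ Icc (z - r) (z + r), F x ^ 2 ≤ r * B := by
    intro x hx
    have hFx : F x = ∫ t in z..x, g t := by linarith [hF z x]
    rcases le_total z x with hzx | hxz
    · rw [hFx]
      exact hpiece z x (by linarith) hzx hx.2 (by rw [abs_le]; constructor <;> linarith [hx.2])
    · rw [hFx, integral_symm, neg_sq]
      exact hpiece x z hx.1 hxz (by linarith) (by rw [abs_le]; constructor <;> linarith [hx.1])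
  calc ∫ x in z - r..z + r, F x ^ 2 ≤ ∫ _ in z - r..z + r, r * B :=
        integral_mono_on (by linarith)
          (((continuous_of_sub_eq_integral hF hg).pow 2).intervalIntegrable _ _)
          intervalIntegrable_const hpt
    _ = 2 * r ^ 2 * B := by rw [intervalIntegral.integral_const, smul_eq_mul]; ring

theorem integral_sq_le_of_eq_zero_at_midpoints (hF : ∀ x y, F y - F x = ∫ t in x..y, g t)
    (hg : LocallyIntegrable g) (hg2 : LocallyIntegrable fun t => g t ^ 2)
    {a r : ℝ} (hr : 0 ≤ r) (n : ℕ) (hz : ∀ k < n, F (a + (2 * k + 1) * r) = 0) :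
    ∫ x in a..a + n * (2 * r), F x ^ 2 ≤ 2 * r ^ 2 * ∫ x in a..a + n * (2 * r), g x ^ 2 := by
  have hcell : ∀ k : ℕ, a + k * (2 * r) = a + (2 * k + 1) * r - r ∧
      a + (k + 1 : ℕ) * (2 * r) = a + (2 * k + 1) * r + r := fun k => by
    push_cast; constructor <;> ring
  have hsum := fun f : ℝ → ℝ => fun hf : LocallyIntegrable f =>
    sum_integral_adjacent_intervals (a := fun k : ℕ => a + k * (2 * r)) (n := n)
      (f := f) fun k _ => hf.intervalIntegrable _ _
  have hFc := continuous_of_sub_eq_integral hF hg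
  simp only [Nat.cast_zero, zero_mul, add_zero] at hsum
  rw [← hsum (fun x => F x ^ 2) (hFc.pow 2).locallyIntegrable, ← hsum _ hg2, Finset.mul_sum]
  refine Finset.sum_le_sum fun k hk => ?_
  rw [(hcell k).1, (hcell k).2]
  exact integral_sq_le_of_eq_zero hF hg hg2 hr (hz k (Finset.mem_range.mp hk))

end Poincare

noncomputable def squareWave (t : ℝ) : ℝ := (-1) ^ ⌊t⌋

theorem squareWave_add_one (t : ℝ) : squareWave (t + 1) = -squareWave t := by
  rw [squareWave, squareWave, Int.floor_add_one, zpow_add_one₀ (by norm_num)]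
  ring

theorem squareWave_one_sub {t : ℝ} (ht : t ∉ range ((↑) : ℤ → ℝ)) :
    squareWave (1 - t) = squareWave t := by
  rw [squareWave, squareWave, sub_eq_neg_add, Int.floor_add_one, Int.floor_neg,
    (Int.ceil_eq_floor_add_one_iff_notMem t).mpr ht, neg_add, neg_add_cancel_right, zpow_neg,
    ← inv_zpow, inv_neg_one]

theorem abs_squareWave (t : ℝ) : |squareWave t| = 1 :=
  abs_neg_one_zpow _

theorem squareWave_sq (t : ℝ) : squareWave t ^ 2 = 1 := by
  rw [← sq_abs, abs_squareWave, one_pow]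

theorem squareWave_ne_zero (t : ℝ) : squareWave t ≠ 0 :=
  abs_ne_zero.mp ((abs_squareWave t).trans_ne one_ne_zero)

theorem measurable_squareWave : Measurable squareWave :=
  measurable_from_top.comp Int.measurable_floor

theorem squareWave_eq_of_mem_Ico {m : ℤ} {t : ℝ} (ht : t ∈ Ico (m / 2 : ℝ) ((m + 1) / 2)) :
    squareWave t = squareWave (m / 2) := by
  set k := ⌊(m : ℝ) / 2⌋
  have hk : (m : ℝ) < 2 * k + 2 := by linarith [Int.lt_floor_add_one ((m : ℝ) / 2)]
  have hk' : ((m + 1 : ℤ) : ℝ) ≤ 2 * k + 2 := by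
    exact_mod_cast Int.add_one_le_of_lt (by exact_mod_cast hk : m < 2 * k + 2)
  rw [squareWave, squareWave, Int.floor_eq_iff.mpr ⟨(Int.floor_le _).trans ht.1, ?_⟩]
  push_cast at hk'
  linarith [ht.2]

-- Up to normalisation, Schoenberg's Euler splines on the grid `c + h ℤ`; the square wave is `1`
-- on `[c - h, c + h)`.
noncomputable def eulerSpline (h c : ℝ) (j : ℕ) : ℝ → ℝ :=
  (antiperiodicPrimitive (2 * h))^[j] fun x => squareWave ((x - c) / (2 * h) + 1 / 2)

section EulerSpline

variable {h c : ℝ}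

theorem eulerSpline_succ (h c : ℝ) (j : ℕ) :
    eulerSpline h c (j + 1) = antiperiodicPrimitive (2 * h) (eulerSpline h c j) :=
  iterate_succ_apply' _ _ _

theorem antiperiodic_eulerSpline (hh : h ≠ 0) (j : ℕ) :
    Antiperiodic (eulerSpline h c j) (2 * h) := by
  induction j with
  | zero =>
    intro x
    have ht : (x + 2 * h - c) / (2 * h) + 1 / 2 = (x - c) / (2 * h) + 1 / 2 + 1 := by
      field_simp; ring
    simp only [eulerSpline, iterate_zero, id, ht, squareWave_add_one]
  | succ j ih => rw [eulerSpline_succ]; exact ih.antiperiodicPrimitive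

theorem locallyIntegrable_eulerSpline_zero : LocallyIntegrable (eulerSpline h c 0) :=
  (locallyIntegrable_const (1 : ℝ)).mono
    (measurable_squareWave.comp (by fun_prop)).aestronglyMeasurable
    (.of_forall fun x => by rw [norm_one, Real.norm_eq_abs]; exact (abs_squareWave _).le)

theorem continuous_eulerSpline_succ (hh : h ≠ 0) (j : ℕ) :
    Continuous (eulerSpline h c (j + 1)) := by
  induction j with
  | zero =>
    rw [eulerSpline_succ]
    exact continuous_antiperiodicPrimitive locallyIntegrable_eulerSpline_zero
      (antiperiodic_eulerSpline hh 0)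
  | succ j ih =>
    rw [eulerSpline_succ]
    exact continuous_antiperiodicPrimitive ih.locallyIntegrable (antiperiodic_eulerSpline hh _)

theorem locallyIntegrable_eulerSpline (hh : h ≠ 0) :
    ∀ j, LocallyIntegrable (eulerSpline h c j)
  | 0 => locallyIntegrable_eulerSpline_zero
  | j + 1 => (continuous_eulerSpline_succ hh j).locallyIntegrable

theorem locallyIntegrable_sq_eulerSpline (hh : h ≠ 0) :
    ∀ j, LocallyIntegrable fun x => eulerSpline h c j x ^ 2
  | 0 => by
    simpa only [eulerSpline, iterate_zero, id, squareWave_sq] using locallyIntegrable_const 1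
  | j + 1 => ((continuous_eulerSpline_succ hh j).pow 2).locallyIntegrable

theorem eulerSpline_succ_sub (hh : h ≠ 0) (j : ℕ) (x y : ℝ) :
    eulerSpline h c (j + 1) y - eulerSpline h c (j + 1) x = ∫ t in x..y, eulerSpline h c j t := by
  rw [eulerSpline_succ]
  exact antiperiodicPrimitive_sub (locallyIntegrable_eulerSpline hh j)
    (antiperiodic_eulerSpline hh j) x y

theorem ae_hasDerivAt_eulerSpline_succ (hh : h ≠ 0) (j : ℕ) :
    ∀ᵐ x, HasDerivAt (eulerSpline h c (j + 1)) (eulerSpline h c j x) x := by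
  rw [eulerSpline_succ]
  exact ae_hasDerivAt_antiperiodicPrimitive (locallyIntegrable_eulerSpline hh j)
    (antiperiodic_eulerSpline hh j)

theorem hasDerivAt_eulerSpline_succ_succ (hh : h ≠ 0) (j : ℕ) (x : ℝ) :
    HasDerivAt (eulerSpline h c (j + 2)) (eulerSpline h c (j + 1) x) x := by
  rw [eulerSpline_succ]
  exact hasDerivAt_antiperiodicPrimitive (continuous_eulerSpline_succ hh j)
    (antiperiodic_eulerSpline hh _) x

theorem deriv_eulerSpline_succ_succ (hh : h ≠ 0) (j : ℕ) :
    deriv (eulerSpline h c (j + 2)) = eulerSpline h c (j + 1) :=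
  funext fun x => (hasDerivAt_eulerSpline_succ_succ hh j x).deriv

theorem contDiff_eulerSpline_succ (hh : h ≠ 0) (j : ℕ) :
    ContDiff ℝ j (eulerSpline h c (j + 1)) := by
  induction j with
  | zero => exact contDiff_zero.mpr (continuous_eulerSpline_succ hh 0)
  | succ j ih =>
    rw [Nat.cast_succ, contDiff_succ_iff_deriv, deriv_eulerSpline_succ_succ hh]
    exact ⟨fun x => (hasDerivAt_eulerSpline_succ_succ hh j x).differentiableAt, by simp, ih⟩

theorem iteratedDeriv_eulerSpline (hh : h ≠ 0) (j k : ℕ) :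
    iteratedDeriv k (eulerSpline h c (j + 1 + k)) = eulerSpline h c (j + 1) := by
  induction k with
  | zero => rfl
  | succ k ih =>
    rw [iteratedDeriv_succ', show j + 1 + (k + 1) = j + k + 2 by omega,
      deriv_eulerSpline_succ_succ hh, show j + k + 1 = j + 1 + k by omega, ih]

theorem ae_eulerSpline_two_mul_sub (hh : h ≠ 0) :
    ∀ j : ℕ, ∀ᵐ x, eulerSpline h c j (2 * (c + j * h) - x) = eulerSpline h c j x
  | 0 => by
    set θ : ℝ → ℝ := fun x => (x - c) / (2 * h) + 1 / 2
    have hθ : Injective θ := fun x y hxy => by simpa [θ, hh] using hxy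
    filter_upwards [((countable_range ((↑) : ℤ → ℝ)).preimage hθ).ae_notMem volume] with x hx
    have : θ (2 * (c + (0 : ℕ) * h) - x) = 1 - θ x := by simp only [θ]; field_simp; ring
    change squareWave (θ _) = squareWave (θ x)
    rw [this]
    exact squareWave_one_sub hx
  | j + 1 => .of_forall fun x => by
    have hodd := antiperiodicPrimitive_two_mul_sub (antiperiodic_eulerSpline hh j)
      (ae_eulerSpline_two_mul_sub hh j)
    have hshift : 2 * (c + ((j + 1 : ℕ) : ℝ) * h) - x = 2 * (c + j * h) - x + 2 * h := by
      push_cast; ring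
    rw [eulerSpline_succ, hshift, (antiperiodic_eulerSpline hh j).antiperiodicPrimitive, hodd,
      neg_neg]

theorem eulerSpline_succ_two_mul_sub (hh : h ≠ 0) (j : ℕ) (x : ℝ) :
    eulerSpline h c (j + 1) (2 * (c + j * h) - x) = -eulerSpline h c (j + 1) x := by
  rw [eulerSpline_succ]
  exact antiperiodicPrimitive_two_mul_sub (antiperiodic_eulerSpline hh j)
    (ae_eulerSpline_two_mul_sub hh j) x

theorem eulerSpline_succ_eq_zero (hh : h ≠ 0) (j : ℕ) (k : ℤ) :
    eulerSpline h c (j + 1) (c + j * h + k * (2 * h)) = 0 := by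
  have hcenter := eulerSpline_succ_two_mul_sub (c := c) hh j (c + j * h)
  rw [show 2 * (c + j * h) - (c + j * h) = c + j * h by ring, CharZero.eq_neg_self_iff] at hcenter
  rw [(antiperiodic_eulerSpline hh _).add_int_mul_eq, hcenter, mul_zero]

theorem exists_natDegree_le_eulerSpline_succ_eq (hh : 0 < h) (j : ℕ) (i : ℤ) :
    ∃ Q : ℝ[X], Q.natDegree ≤ j + 1 ∧
      ∀ x ∈ Icc (c + i * h) (c + (i + 1) * h), eulerSpline h c (j + 1) x = Q.eval x := by
  induction j with
  | zero =>
    have hconst : ∀ x ∈ Ioo (c + i * h) (c + (i + 1) * h),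
        eulerSpline h c 0 x = (C (squareWave ((i + 1 : ℤ) / 2)) : ℝ[X]).eval x := by
      intro x hx
      have h1 : (i : ℝ) < (x - c) / h := (lt_div_iff₀ hh).mpr (by linarith [hx.1])
      have h2 : (x - c) / h < i + 1 := (div_lt_iff₀ hh).mpr (by linarith [hx.2])
      rw [eval_C]
      refine squareWave_eq_of_mem_Ico ⟨?_, ?_⟩ <;> push_cast <;>
        linarith [show (x - c) / (2 * h) = (x - c) / h / 2 by ring]
    simpa using exists_natDegree_le_eval_eq_of_sub_eq_integral
      (fun x _ => eulerSpline_succ_sub hh.ne' 0 _ x) hconst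
  | succ j ih =>
    obtain ⟨Q, hQdeg, hQ⟩ := ih
    obtain ⟨Q', hQ'deg, hQ'⟩ := exists_natDegree_le_eval_eq_of_sub_eq_integral
      (fun x _ => eulerSpline_succ_sub hh.ne' (j + 1) _ x)
      fun x hx => hQ x (Ioo_subset_Icc_self hx)
    exact ⟨Q', by omega, hQ'⟩

theorem eulerSpline_succ_not_const (hh : h ≠ 0) {L R : ℝ} (hLR : L < R) (j : ℕ) (C : ℝ) :
    ¬ ∀ x ∈ Ioo L R, eulerSpline h c (j + 1) x = C := by
  have hderiv_eq_zero : ∀ {F : ℝ → ℝ} {C y : ℝ} (x : ℝ), (∀ x ∈ Ioo L R, F x = C) →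
      x ∈ Ioo L R → HasDerivAt F y x → y = 0 := fun x hF hx hd =>
    hd.unique ((hasDerivAt_const x _).congr_of_eventuallyEq
      (Filter.eventually_of_mem (Ioo_mem_nhds hx.1 hx.2) hF))
  induction j generalizing C with
  | zero =>
    intro hF
    have : (ae (volume.restrict (Ioo L R))).NeBot := ae_restrict_neBot.mpr (by simp [hLR])
    obtain ⟨x, hx, hd⟩ := ((ae_restrict_mem (μ := volume) (measurableSet_Ioo (a := L) (b := R))).and
      (ae_restrict_of_ae (ae_hasDerivAt_eulerSpline_succ hh 0))).exists
    exact squareWave_ne_zero _ (hderiv_eq_zero x hF hx hd)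
  | succ j ih =>
    intro hF
    exact ih 0 fun x hx => hderiv_eq_zero x hF hx (hasDerivAt_eulerSpline_succ_succ hh j x)

end EulerSpline

section SplineSpace

variable {a b h : ℝ}

theorem isSplineOn_eulerSpline (hh : 0 < h) (j N : ℕ) {c : ℝ} (m : ℤ) (hc : a = c + m * h) :
    IsSplineOn (j + 1) N h a b (eulerSpline h c (j + 1)) := by
  refine ⟨(contDiff_eulerSpline_succ hh.ne' j).contDiffOn, fun i _ => ?_⟩
  obtain ⟨Q, hQdeg, hQ⟩ := exists_natDegree_le_eulerSpline_succ_eq (c := c) hh j (m + i)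
  refine ⟨Q, hQdeg, fun x hx => hQ x ?_⟩
  convert hx using 2 <;> push_cast <;> rw [hc] <;> ring

theorem iteratedDerivWithin_eulerSpline (hh : 0 < h) (hab : a < b) (c : ℝ) (i k : ℕ)
    {x : ℝ} (hx : x ∈ Icc a b) :
    iteratedDerivWithin k (eulerSpline h c (i + k + 1)) (Icc a b) x =
      eulerSpline h c (i + 1) x := by
  have hsmooth : ContDiff ℝ k (eulerSpline h c (i + k + 1)) :=
    (contDiff_eulerSpline_succ hh.ne' _).of_le (by exact_mod_cast Nat.le_add_left k i)
  rw [iteratedDerivWithin_eq_iteratedDeriv (uniqueDiffOn_Icc hab) hsmooth.contDiffAt hx,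
    show i + k + 1 = i + 1 + k by omega, iteratedDeriv_eulerSpline hh.ne']

theorem isReducedSplineOn_eulerSpline (hh : 0 < h) (hab : a < b) {n : ℕ}
    (hb : b = a + n * (2 * h)) (j : ℕ) :
    IsReducedSplineOn (j + 1) (2 * n) h a b (eulerSpline h (a - (j + 1) * h) (j + 1)) := by
  refine ⟨isSplineOn_eulerSpline hh j _ (j + 1) (by push_cast; ring), fun l hl => ?_⟩
  obtain ⟨i, rfl⟩ : ∃ i, j = i + (2 * l + 1) := ⟨j - (2 * l + 1), by omega⟩
  have hzero := fun k : ℤ => eulerSpline_succ_eq_zero (c := a - (↑(i + (2 * l + 1)) + 1) * h)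
    hh.ne' i k
  constructor
  · rw [iteratedDerivWithin_eulerSpline hh hab _ _ _ (left_mem_Icc.mpr hab.le)]
    convert hzero (l + 1) using 2
    push_cast; ring
  · rw [iteratedDerivWithin_eulerSpline hh hab _ _ _ (right_mem_Icc.mpr hab.le)]
    convert hzero (l + 1 + n) using 2
    rw [hb]; push_cast; ring

theorem L2_le_mul_L2_of_integral_sq_le {u v : ℝ → ℝ} {C : ℝ} (hC : 0 ≤ C)
    (huv : ∫ x in Ioo a b, u x ^ 2 ≤ C ^ 2 * ∫ x in Ioo a b, v x ^ 2) :
    L2 a b u ≤ C * L2 a b v := by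
  rw [L2, L2, ← Real.sqrt_sq hC, ← Real.sqrt_mul (sq_nonneg C)]
  exact Real.sqrt_le_sqrt huv

theorem L2_eulerSpline_le (hh : 0 < h) {n : ℕ} (hb : b = a + n * (2 * h)) (j : ℕ) :
    L2 a b (eulerSpline h (a - (j + 1) * h) (j + 1)) ≤
      √2 * h * L2 a b (deriv (eulerSpline h (a - (j + 1) * h) (j + 1))) := by
  set c := a - (j + 1) * h
  have hab : a ≤ b := by rw [hb]; nlinarith [n.cast_nonneg (α := ℝ)]
  have hIoo : ∀ v : ℝ → ℝ, ∫ x in Ioo a b, v x = ∫ x in a..b, v x := fun v => by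
    rw [integral_of_le hab, integral_Ioc_eq_integral_Ioo]
  refine L2_le_mul_L2_of_integral_sq_le (by positivity) ?_
  have hderiv : ∫ x in Ioo a b, deriv (eulerSpline h c (j + 1)) x ^ 2 =
      ∫ x in Ioo a b, eulerSpline h c j x ^ 2 :=
    integral_congr_ae (ae_restrict_of_ae ((ae_hasDerivAt_eulerSpline_succ (c := c) hh.ne' j).mono
      fun x hx => by simp only [hx.deriv]))
  rw [hderiv, hIoo, hIoo, mul_pow, Real.sq_sqrt zero_le_two, hb]
  refine integral_sq_le_of_eq_zero_at_midpoints (eulerSpline_succ_sub hh.ne' j)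
    (locallyIntegrable_eulerSpline hh.ne' j) (locallyIntegrable_sq_eulerSpline hh.ne' j) hh.le n
    fun k _ => ?_
  convert eulerSpline_succ_eq_zero (c := c) hh.ne' j (k + 1) using 2
  push_cast; ring

end SplineSpace

theorem inverse_inequality_sharp_general (a b h : ℝ) (p n : ℕ)
    (hab : a < b) (hp : 1 ≤ p) (hh : 0 < h)
    (hgrid : b - a = n * (2 * h)) :
    ∃ u : ℝ → ℝ, IsReducedSplineOn p (2 * n) h a b u ∧
      (¬ ∃ c : ℝ, ∀ x ∈ Set.Icc a b, u x = c) ∧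
      (1 / (2 * Real.sqrt 2)) * h⁻¹ * L2 a b u ≤ L2 a b (deriv u) := by
  obtain ⟨j, rfl⟩ : ∃ j, p = j + 1 := ⟨p - 1, by omega⟩
  have hb : b = a + n * (2 * h) := by linarith
  set u := eulerSpline h (a - (j + 1) * h) (j + 1)
  refine ⟨u, isReducedSplineOn_eulerSpline hh hab hb j, fun ⟨C, hC⟩ =>
    eulerSpline_succ_not_const hh.ne' hab j C fun x hx => hC x (Ioo_subset_Icc_self hx), ?_⟩
  have hL2 : 0 ≤ L2 a b (deriv u) := Real.sqrt_nonneg _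
  calc 1 / (2 * √2) * h⁻¹ * L2 a b u ≤ 1 / (2 * √2) * h⁻¹ * (√2 * h * L2 a b (deriv u)) := by
        gcongr
        exact L2_eulerSpline_le hh hb j
    _ = L2 a b (deriv u) / 2 := by field_simp
    _ ≤ L2 a b (deriv u) := by linarith

/-- Corollary 3 of the paper: the inverse inequality on the reduced
spline space is sharp up to a constant. Here `(b−a)/(2h) = n`, so the grid of size `h`
has `2n` subintervals. -/
theorem inverse_inequality_sharp (a b h : ℝ) (p n : ℕ)
    (hab : a < b) (hp : 1 ≤ p) (hh : 0 < h) (hn : 0 < n)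
    (hgrid : b - a = n * (2 * h)) (hhp : 2 * h * p < b - a) :
    ∃ u : ℝ → ℝ, IsReducedSplineOn p (2 * n) h a b u ∧
      (¬ ∃ c : ℝ, ∀ x ∈ Set.Icc a b, u x = c) ∧
      (1 / (2 * Real.sqrt 2)) * h⁻¹ * L2 a b u ≤ L2 a b (deriv u) :=
  inverse_inequality_sharp_general a b h p n hab hp hh hgrid
end
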